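/- arXiv:1312.1554 — 9 statements merged into one kernel-verified Lean document; each statement's English description precedes it below -/
import Mathlib

section
/- For every positive integer n, the sum over k from 1 to n of (-1)^k * C(n,k) * C(n+k,k) * H_k equals 2*(-1)^n * H_n, where H_k is the k-th harmonic number. -/
open Polynomial Finset

-- ascending product eval
lemma prod_asc_eval (m k : ℕ) :
    ∏ i ∈ Icc 1 k, ((m:ℚ) + i) = k.factorial * ((m+k).choose k) := by
  induction k with
  | zero => simp
  | succ k ih =>
    rw [Finset.prod_Icc_succ_top (Nat.le_add_left 1 k), ih, Nat.factorial_succ]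
    have h := Nat.add_one_mul_choose_eq (m+k) k
    have h2 : ((m+k+1 : ℕ):ℚ) * ((m+k).choose k) = (((m+k+1).choose (k+1)):ℚ) * ((k:ℚ)+1) := by
      exact_mod_cast congrArg (Nat.cast (R := ℚ)) h
    rw [show m + (k+1) = m + k + 1 from rfl]
    push_cast at h2 ⊢
    linear_combination (k.factorial:ℚ) * h2

-- descending product eval
lemma prod_desc_eval (i m : ℕ) :
    ∏ t ∈ range i, ((m:ℚ) - t) = i.factorial * (m.choose i) := by
  induction i with
  | zero => simp
  | succ i ih =>
    rw [Finset.prod_range_succ, ih, Nat.factorial_succ]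
    rcases le_or_gt (i+1) m with h | h
    · have h1 := Nat.choose_succ_right_eq m i
      have h2 : ((m.choose (i+1)):ℚ) * ((i:ℚ)+1) = (m.choose i) * (((m - i:ℕ)):ℚ) := by
        exact_mod_cast congrArg (Nat.cast (R := ℚ)) h1
      have h3 : ((m - i : ℕ):ℚ) = (m:ℚ) - i := by
        rw [Nat.cast_sub (by omega)]
      rw [h3] at h2
      push_cast
      linear_combination (-(i.factorial:ℚ)) * h2
    · rcases eq_or_lt_of_le (Nat.lt_succ_iff.mp h) with h' | h'
      · subst h'
        simp [Nat.choose_eq_zero_of_lt (Nat.lt_succ_self m)]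
      · simp [Nat.choose_eq_zero_of_lt h', Nat.choose_eq_zero_of_lt (by omega : m < i + 1)]

lemma rec_lem (n : ℕ) (f : ℚ[X]) :
    ∑ k ∈ range (n+2), (-1:ℚ)^k * ((n+1).choose k) * f.eval (k:ℚ)
      = - ∑ k ∈ range (n+1), (-1:ℚ)^k * (n.choose k) * ((f.comp (X + C 1) - f).eval (k:ℚ)) := by
  have hev : ∀ k : ℕ, (f.comp (X + C 1) - f).eval (k:ℚ) = f.eval ((k:ℚ)+1) - f.eval (k:ℚ) := by
    intro k; simp [eval_comp]
  simp only [hev]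
  set S1 := ∑ k ∈ range (n+1), (-1:ℚ)^k * (n.choose k) * f.eval ((k:ℚ)+1) with hS1
  set S2 := ∑ k ∈ range (n+1), (-1:ℚ)^k * (n.choose k) * f.eval (k:ℚ) with hS2
  have hB : ∑ k ∈ range (n+2), (-1:ℚ)^k * (n.choose k) * f.eval (k:ℚ) = S2 := by
    rw [Finset.sum_range_succ, Nat.choose_succ_self]
    simp [hS2]
  have hB' : ∑ k ∈ range (n+2), (-1:ℚ)^k * (n.choose k) * f.eval (k:ℚ)
      = (∑ k ∈ range (n+1), (-1:ℚ)^(k+1) * (n.choose (k+1)) * f.eval ((k:ℚ)+1)) + f.eval 0 := by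
    rw [Finset.sum_range_succ' (fun k => (-1:ℚ)^k * (n.choose k) * f.eval (k:ℚ)) (n+1)]
    push_cast
    simp
  have hL : ∑ k ∈ range (n+2), (-1:ℚ)^k * ((n+1).choose k) * f.eval (k:ℚ)
      = (∑ k ∈ range (n+1), (-1:ℚ)^(k+1) * ((n+1).choose (k+1)) * f.eval ((k:ℚ)+1)) + f.eval 0 := by
    rw [Finset.sum_range_succ' (fun k => (-1:ℚ)^k * ((n+1).choose k) * f.eval (k:ℚ)) (n+1)]
    push_cast
    simp
  have hsplit : ∑ k ∈ range (n+1), (-1:ℚ)^(k+1) * ((n+1).choose (k+1)) * f.eval ((k:ℚ)+1)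
      = (∑ k ∈ range (n+1), (-1:ℚ)^(k+1) * (n.choose k) * f.eval ((k:ℚ)+1))
        + ∑ k ∈ range (n+1), (-1:ℚ)^(k+1) * (n.choose (k+1)) * f.eval ((k:ℚ)+1) := by
    rw [← Finset.sum_add_distrib]
    apply Finset.sum_congr rfl
    intro k _
    rw [Nat.choose_succ_succ]
    push_cast
    ring
  have hneg : ∑ k ∈ range (n+1), (-1:ℚ)^(k+1) * (n.choose k) * f.eval ((k:ℚ)+1) = -S1 := by
    rw [hS1, ← Finset.sum_neg_distrib]
    apply Finset.sum_congr rfl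
    intro k _; ring
  have hrest : ∑ k ∈ range (n+1), (-1:ℚ)^(k+1) * (n.choose (k+1)) * f.eval ((k:ℚ)+1)
      = S2 - f.eval 0 := by
    have := hB'.symm.trans hB
    linarith [this]
  have hfin : ∑ x ∈ range (n+1), (-1:ℚ)^x * (n.choose x) * (f.eval ((x:ℚ)+1) - f.eval (x:ℚ))
      = S1 - S2 := by
    rw [hS1, hS2, ← Finset.sum_sub_distrib]
    apply Finset.sum_congr rfl
    intro k _; ring
  rw [hL, hsplit, hneg, hrest, hfin]
  ring

lemma zero_lem : ∀ (n : ℕ) (f : ℚ[X]), f.natDegree < n →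
    ∑ k ∈ range (n+1), (-1:ℚ)^k * (n.choose k) * f.eval (k:ℚ) = 0 := by
  intro n
  induction n with
  | zero => intro f hf; exact absurd hf (Nat.not_lt_zero _)
  | succ n ih =>
    intro f hf
    by_cases hdeg : f.natDegree = 0
    · obtain ⟨c, rfl⟩ := Polynomial.natDegree_eq_zero.mp hdeg
      have hz : (C c : ℚ[X]).comp (X + C 1) - C c = 0 := by simp
      rw [rec_lem n (C c), hz]
      simp
    · have hf1 : 1 ≤ f.natDegree := Nat.one_le_iff_ne_zero.mpr hdeg
      have hn1 : 1 ≤ n := le_trans hf1 (Nat.lt_succ_iff.mp hf)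
      set g := f.comp (X + C 1) - f with hg
      have hfz : f ≠ 0 := fun h => hdeg (by simp [h])
      have hdc : (f.comp (X + C 1)).natDegree = f.natDegree := by
        rw [natDegree_comp, natDegree_X_add_C, mul_one]
      have hlc : (f.comp (X + C 1)).leadingCoeff = f.leadingCoeff := by
        rw [leadingCoeff_comp (by rw [natDegree_X_add_C]; exact one_ne_zero)]
        have : (X + C (1:ℚ)).leadingCoeff = 1 := (monic_X_add_C 1).leadingCoeff
        rw [this, one_pow, mul_one]
      have hcz : f.comp (X + C 1) ≠ 0 := by
        intro h
        apply hfz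
        rw [← leadingCoeff_eq_zero, ← hlc, h, leadingCoeff_zero]
      have hdd : (f.comp (X + C 1)).degree = f.degree := by
        rw [degree_eq_natDegree hcz, degree_eq_natDegree hfz, hdc]
      have hdlt : g.degree < f.degree := by
        have := degree_sub_lt hdd hcz hlc
        rwa [hdd] at this
      have hglt : g.natDegree < n := by
        rcases eq_or_ne g 0 with h0 | h0
        · rw [h0, natDegree_zero]; omega
        · have := Polynomial.natDegree_lt_natDegree h0 hdlt
          omega
      rw [rec_lem n f, ih g hglt, neg_zero]

lemma inner_lem (n i : ℕ) (hi : i ≤ n) :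
    ∑ k ∈ range (n+1), (-1:ℚ)^k * (n.choose k) * (k.choose i)
      = if i = n then (-1:ℚ)^n else 0 := by
  rcases eq_or_lt_of_le hi with h | h
  · subst h
    rw [if_pos rfl, Finset.sum_range_succ]
    have h0 : ∑ k ∈ range i, (-1:ℚ)^k * (i.choose k) * (k.choose i) = 0 :=
      Finset.sum_eq_zero fun k hk => by
        rw [Nat.choose_eq_zero_of_lt (mem_range.mp hk)]; simp
    rw [h0, zero_add]
    simp
  · rw [if_neg (by omega)]
    set fi : ℚ[X] := C ((i.factorial:ℚ)⁻¹) * ∏ t ∈ range i, (X - C (t:ℚ)) with hfi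
    have hfact : (i.factorial : ℚ) ≠ 0 := by positivity
    have heval : ∀ k : ℕ, fi.eval (k:ℚ) = (k.choose i : ℚ) := by
      intro k
      rw [hfi]
      simp only [eval_mul, eval_C, eval_prod, eval_sub, eval_X]
      rw [prod_desc_eval i k]
      field_simp
    have hdeg : fi.natDegree = i := by
      have hp := natDegree_prod (s := range i) (f := fun t : ℕ => (X : ℚ[X]) - C (t:ℚ))
        (fun t _ => X_sub_C_ne_zero (t:ℚ))
      have h1 : ∀ t ∈ range i, ((fun t : ℕ => (X:ℚ[X]) - C (t:ℚ)) t).natDegree = 1 :=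
        fun t _ => natDegree_X_sub_C _
      rw [hfi, natDegree_C_mul (inv_ne_zero hfact), hp, Finset.sum_congr rfl h1,
        Finset.sum_const, smul_eq_mul, mul_one, card_range]
    have := zero_lem n fi (by omega)
    rw [← this]
    apply Finset.sum_congr rfl
    intro k _
    rw [heval]

lemma nat_id (n m : ℕ) :
    ∑ k ∈ range (n+1), (-1:ℚ)^k * (n.choose k) * ((m+k).choose k)
      = (-1:ℚ)^n * (m.choose n) := by
  have vdm : ∀ k ∈ range (n+1), (-1:ℚ)^k * (n.choose k) * ((m+k).choose k)
      = ∑ i ∈ range (n+1), (m.choose i : ℚ) * ((-1:ℚ)^k * (n.choose k) * (k.choose i)) := by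
    intro k hk
    have hk' : k ≤ n := mem_range_succ_iff.mp hk
    have h1 : (m+k).choose k = ∑ i ∈ range (k+1), m.choose i * k.choose (k - i) := by
      rw [Nat.add_choose_eq, Finset.Nat.sum_antidiagonal_eq_sum_range_succ_mk]
    have h2 : ∑ i ∈ range (k+1), m.choose i * k.choose (k-i)
        = ∑ i ∈ range (k+1), m.choose i * k.choose i :=
      Finset.sum_congr rfl fun i hi => by rw [Nat.choose_symm (mem_range_succ_iff.mp hi)]
    have h3 : ∑ i ∈ range (k+1), (m.choose i:ℚ) * (k.choose i)
        = ∑ i ∈ range (n+1), (m.choose i:ℚ) * (k.choose i) := by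
      apply Finset.sum_subset (Finset.range_subset_range.mpr (by omega))
      intro i hi' hi
      have hki : k < i := by
        simp only [Finset.mem_range] at hi' hi
        omega
      simp [Nat.choose_eq_zero_of_lt hki]
    have h4 : ((m+k).choose k : ℚ) = ∑ i ∈ range (n+1), (m.choose i:ℚ) * (k.choose i) := by
      rw [h1, h2] at *
      push_cast [h1, h2]
      exact h3
    rw [h4, Finset.mul_sum]
    apply Finset.sum_congr rfl
    intro i _
    ring
  rw [Finset.sum_congr rfl vdm, Finset.sum_comm]
  have : ∀ i ∈ range (n+1), ∑ k ∈ range (n+1), (m.choose i : ℚ) * ((-1:ℚ)^k * (n.choose k) * (k.choose i))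
      = (m.choose i : ℚ) * (if i = n then (-1:ℚ)^n else 0) := by
    intro i hi
    rw [← Finset.mul_sum, inner_lem n i (mem_range_succ_iff.mp hi)]
  rw [Finset.sum_congr rfl this, Finset.sum_eq_single n
    (fun i _ hne => by rw [if_neg hne, mul_zero])
    (fun hn => absurd (self_mem_range_succ n) hn)]
  rw [if_pos rfl]
  ring

lemma shift_sum (n : ℕ) (f : ℕ → ℚ) : ∑ j ∈ Icc 1 n, f j = ∑ j ∈ range n, f (j+1) := by
  induction n with
  | zero => simp
  | succ n ih => rw [Finset.sum_Icc_succ_top (by omega), ih, Finset.sum_range_succ]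

lemma L3 (n j : ℕ) (hj1 : 1 ≤ j) (hjn : j ≤ n) :
    ∑ k ∈ range (n+1), (-1:ℚ)^k * (n.choose k) * (((n+k).choose k : ℚ) * ((k:ℚ)+j)⁻¹) = 0 := by
  have hn : 1 ≤ n := le_trans hj1 hjn
  have hjmem : j ∈ Icc 1 n := mem_Icc.mpr ⟨hj1, hjn⟩
  set pj : ℚ[X] := ∏ i ∈ (Icc 1 n).erase j, (X + C (i:ℚ)) with hpj
  have hdeg : pj.natDegree < n := by
    have hp := natDegree_prod (s := (Icc 1 n).erase j) (f := fun i : ℕ => (X:ℚ[X]) + C (i:ℚ))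
      (fun i _ => X_add_C_ne_zero (i:ℚ))
    have h1 : ∀ i ∈ (Icc 1 n).erase j, ((fun i : ℕ => (X:ℚ[X]) + C (i:ℚ)) i).natDegree = 1 :=
      fun i _ => natDegree_X_add_C _
    rw [hpj, hp, Finset.sum_congr rfl h1, Finset.sum_const, smul_eq_mul, mul_one,
      Finset.card_erase_of_mem hjmem, Nat.card_Icc]
    omega
  have heval : ∀ k : ℕ, pj.eval (k:ℚ) = (n.factorial : ℚ) * (((n+k).choose k : ℚ) * ((k:ℚ)+j)⁻¹) := by
    intro k
    have hne : ((k:ℚ)+j) ≠ 0 := by positivity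
    have hkey : pj.eval (k:ℚ) * ((k:ℚ)+j) = (n.factorial : ℚ) * ((n+k).choose k : ℚ) := by
      have := Finset.prod_erase_mul (Icc 1 n) (fun i : ℕ => (k:ℚ) + i) hjmem
      rw [hpj]
      simp only [eval_prod, eval_add, eval_X, eval_C]
      rw [this, prod_asc_eval k n, Nat.add_comm k n, Nat.choose_symm_add]
    field_simp at hkey ⊢
    linarith [hkey]
  have hz := zero_lem n pj hdeg
  have hfact : (n.factorial : ℚ) ≠ 0 := by positivity
  calc ∑ k ∈ range (n+1), (-1:ℚ)^k * (n.choose k) * (((n+k).choose k : ℚ) * ((k:ℚ)+j)⁻¹)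
      = (n.factorial:ℚ)⁻¹ * ∑ k ∈ range (n+1), (-1:ℚ)^k * (n.choose k) * pj.eval (k:ℚ) := by
        rw [Finset.mul_sum]
        apply Finset.sum_congr rfl
        intro k _
        rw [heval k]
        field_simp
    _ = 0 := by rw [hz, mul_zero]

lemma derivative_prod_finset (s : Finset ℕ) (f : ℕ → ℚ[X]) :
    derivative (∏ i ∈ s, f i) = ∑ i ∈ s, (∏ j ∈ s.erase i, f j) * derivative (f i) := by
  induction s using Finset.induction_on with
  | empty => simp
  | @insert a s ha ih =>
    rw [Finset.prod_insert ha, derivative_mul, ih, Finset.sum_insert ha,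
      Finset.erase_insert ha, Finset.mul_sum]
    have h1 : ∀ i ∈ s, (∏ j ∈ (insert a s).erase i, f j) * derivative (f i)
        = f a * ((∏ j ∈ s.erase i, f j) * derivative (f i)) := by
      intro i hi
      have hia : i ≠ a := fun h => ha (h ▸ hi)
      rw [Finset.erase_insert_of_ne (Ne.symm hia),
        Finset.prod_insert (fun h => ha (Finset.mem_of_mem_erase h)), mul_assoc]
    rw [Finset.sum_congr rfl h1]
    ring

lemma PQ (n : ℕ) :
    (∑ k ∈ range (n+1), C ((-1:ℚ)^k * (n.choose k) * (k.factorial:ℚ)⁻¹)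
        * ∏ i ∈ Icc 1 k, (X + C (i:ℚ)))
      = C ((-1:ℚ)^n * (n.factorial:ℚ)⁻¹) * ∏ t ∈ range n, (X - C (t:ℚ)) := by
  apply eq_of_infinite_eval_eq
  apply Set.infinite_of_injective_forall_mem (f := (Nat.cast : ℕ → ℚ)) Nat.cast_injective
  intro m
  simp only [Set.mem_setOf_eq, eval_finset_sum, eval_mul, eval_C, eval_prod, eval_add, eval_X,
    eval_sub]
  have h1 : ∀ k ∈ range (n+1),
      (-1:ℚ)^k * (n.choose k) * (k.factorial:ℚ)⁻¹ * ∏ i ∈ Icc 1 k, ((m:ℚ) + i)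
        = (-1:ℚ)^k * (n.choose k) * ((m+k).choose k) := by
    intro k _
    rw [prod_asc_eval m k]
    have : (k.factorial : ℚ) ≠ 0 := by positivity
    field_simp
  rw [Finset.sum_congr rfl h1, nat_id n m, prod_desc_eval n m]
  have : (n.factorial : ℚ) ≠ 0 := by positivity
  field_simp

lemma L2 (n : ℕ) (hn : 1 ≤ n) :
    ∑ k ∈ range (n+1), (-1:ℚ)^k * (n.choose k) * (((n+k).choose k : ℚ)
        * ∑ i ∈ Icc 1 k, ((n:ℚ)+i)⁻¹)
      = (-1:ℚ)^n * ∑ j ∈ Icc 1 n, (j:ℚ)⁻¹ := by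
  have h := congrArg (fun p : ℚ[X] => (derivative p).eval (n:ℚ)) (PQ n)
  simp only [derivative_sum, derivative_C_mul, derivative_prod_finset, eval_finset_sum,
    eval_mul, eval_C, eval_prod, eval_add, eval_X, eval_sub] at h
  -- LHS of h
  have hL : ∀ k ∈ range (n+1),
      (-1:ℚ)^k * (n.choose k) * (k.factorial:ℚ)⁻¹ *
        ∑ i ∈ Icc 1 k, (∏ j ∈ (Icc 1 k).erase i, ((n:ℚ) + j)) *
          (derivative (X + C (i:ℚ))).eval (n:ℚ)
      = (-1:ℚ)^k * (n.choose k) * (((n+k).choose k : ℚ) * ∑ i ∈ Icc 1 k, ((n:ℚ)+i)⁻¹) := by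
    intro k _
    have hkf : (k.factorial : ℚ) ≠ 0 := by positivity
    have h2 : ∀ i ∈ Icc 1 k, (∏ j ∈ (Icc 1 k).erase i, ((n:ℚ) + j)) *
          (derivative (X + C (i:ℚ))).eval (n:ℚ)
        = (k.factorial * ((n+k).choose k) : ℚ) * ((n:ℚ)+i)⁻¹ := by
      intro i hi
      have hine : ((n:ℚ) + i) ≠ 0 := by
        have : 1 ≤ i := (mem_Icc.mp hi).1
        positivity
      have hpe := Finset.prod_erase_mul (Icc 1 k) (fun i : ℕ => (n:ℚ) + i) hi
      simp only [derivative_add, derivative_X, derivative_C, add_zero, eval_one, mul_one]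
      rw [← prod_asc_eval n k, ← hpe]
      field_simp
    rw [Finset.sum_congr rfl h2, ← Finset.mul_sum]
    field_simp
  rw [Finset.sum_congr rfl hL] at h
  -- RHS of h
  have hR : ∑ i ∈ range n, (∏ j ∈ (range n).erase i, ((n:ℚ) - j)) *
        (derivative (X - C (i:ℚ))).eval (n:ℚ)
      = (n.factorial : ℚ) * ∑ j ∈ Icc 1 n, (j:ℚ)⁻¹ := by
    have h2 : ∀ i ∈ range n, (∏ j ∈ (range n).erase i, ((n:ℚ) - j)) *
          (derivative (X - C (i:ℚ))).eval (n:ℚ)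
        = (n.factorial : ℚ) * ((n:ℚ)-i)⁻¹ := by
      intro i hi
      have hine : ((n:ℚ) - i) ≠ 0 := by
        have h3 : i < n := mem_range.mp hi
        have : (i:ℚ) < n := by exact_mod_cast h3
        intro hc
        linarith
      have hpe := Finset.prod_erase_mul (range n) (fun t : ℕ => (n:ℚ) - t) hi
      simp only [derivative_sub, derivative_X, derivative_C, sub_zero, eval_one, mul_one]
      have hfull : ∏ t ∈ range n, ((n:ℚ) - t) = (n.factorial : ℚ) := by
        rw [prod_desc_eval n n, Nat.choose_self, Nat.cast_one, mul_one]
      rw [← hfull, ← hpe]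
      field_simp
    rw [Finset.sum_congr rfl h2, ← Finset.mul_sum]
    congr 1
    -- ∑ i ∈ range n, ((n:ℚ)-i)⁻¹ = ∑ j ∈ Icc 1 n, (j:ℚ)⁻¹
    have hrefl := Finset.sum_range_reflect (fun i => ((n:ℚ) - i)⁻¹) n
    rw [← hrefl]
    rw [shift_sum n (fun j => (j:ℚ)⁻¹)]
    apply Finset.sum_congr rfl
    intro i hi
    have h3 : i < n := mem_range.mp hi
    have : ((n - 1 - i : ℕ) : ℚ) = (n:ℚ) - 1 - i := by
      have : i + 1 ≤ n := h3
      push_cast [Nat.cast_sub (by omega : 1 + i ≤ n)]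
      rw [Nat.sub_sub]
      push_cast [Nat.cast_sub (by omega : 1 + i ≤ n)]
      ring
    rw [this]
    norm_num
    congr 1
    push_cast
    ring
  rw [hR] at h
  rw [h]
  have : (n.factorial : ℚ) ≠ 0 := by positivity
  field_simp

lemma L1 (n : ℕ) : ∑ k ∈ range (n+1), (-1:ℚ)^k * (n.choose k) * ((n+k).choose k) = (-1:ℚ)^n := by
  rw [nat_id n n, Nat.choose_self, Nat.cast_one, mul_one]

lemma ioc_shift (k n : ℕ) (f : ℕ → ℚ) :
    ∑ j ∈ Ioc k (k+n), f j = ∑ j ∈ Ioc 0 n, f (k+j) := by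
  have h := Finset.map_add_left_Ioc 0 n k
  rw [add_zero] at h
  rw [← h, Finset.sum_map]
  rfl

theorem stmt_0 (n : ℕ) (hn : 1 ≤ n) :
    ∑ k ∈ Finset.Icc 1 n, (-1 : ℚ) ^ k * (n.choose k) * ((n + k).choose k) *
      (∑ j ∈ Finset.Icc 1 k, (1 : ℚ) / j) =
    2 * (-1 : ℚ) ^ n * ∑ j ∈ Finset.Icc 1 n, (1 : ℚ) / j := by
  simp only [one_div]
  have hIcc : ∀ m : ℕ, Icc 1 m = Ioc 0 m := fun m => Finset.Icc_add_one_left_eq_Ioc 0 m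
  -- harmonic decomposition
  have hH : ∀ k : ℕ, (∑ j ∈ Icc 1 k, (j:ℚ)⁻¹)
      = (∑ j ∈ Icc 1 n, (j:ℚ)⁻¹) + (∑ i ∈ Icc 1 k, ((n:ℚ)+i)⁻¹)
        - (∑ j ∈ Icc 1 n, ((k:ℚ)+j)⁻¹) := by
    intro k
    have e1 : (∑ j ∈ Ioc 0 k, (j:ℚ)⁻¹) + (∑ j ∈ Ioc k (k+n), (j:ℚ)⁻¹)
        = ∑ j ∈ Ioc 0 (k+n), (j:ℚ)⁻¹ :=
      Finset.sum_Ioc_consecutive _ (Nat.zero_le k) (Nat.le_add_right k n)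
    have e2 : (∑ j ∈ Ioc 0 n, (j:ℚ)⁻¹) + (∑ j ∈ Ioc n (n+k), (j:ℚ)⁻¹)
        = ∑ j ∈ Ioc 0 (n+k), (j:ℚ)⁻¹ :=
      Finset.sum_Ioc_consecutive _ (Nat.zero_le n) (Nat.le_add_right n k)
    have e3 : ∑ j ∈ Ioc k (k+n), (j:ℚ)⁻¹ = ∑ j ∈ Ioc 0 n, ((k:ℚ)+j)⁻¹ := by
      rw [ioc_shift k n (fun j => (j:ℚ)⁻¹)]
      apply Finset.sum_congr rfl
      intro j _
      push_cast
      ring_nf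
    have e4 : ∑ j ∈ Ioc n (n+k), (j:ℚ)⁻¹ = ∑ i ∈ Ioc 0 k, ((n:ℚ)+i)⁻¹ := by
      rw [ioc_shift n k (fun j => (j:ℚ)⁻¹)]
      apply Finset.sum_congr rfl
      intro j _
      push_cast
      ring_nf
    have e5 : k + n = n + k := Nat.add_comm k n
    simp only [hIcc]
    rw [e3] at e1
    rw [e4] at e2
    rw [e5] at e1
    linarith [e1, e2]
  -- extend sum to range (n+1)
  have hext : ∑ k ∈ Icc 1 n, (-1:ℚ)^k * (n.choose k) * ((n+k).choose k)
        * (∑ j ∈ Icc 1 k, (j:ℚ)⁻¹)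
      = ∑ k ∈ range (n+1), (-1:ℚ)^k * (n.choose k) * ((n+k).choose k)
        * (∑ j ∈ Icc 1 k, (j:ℚ)⁻¹) := by
    apply Finset.sum_subset
    · intro x hx
      simp only [mem_Icc] at hx
      simp only [mem_range]
      omega
    · intro x hx hx'
      simp only [mem_range] at hx
      simp only [mem_Icc, not_and, not_le] at hx'
      have : x = 0 := by omega
      subst this
      simp
  rw [hext, Finset.sum_congr rfl (fun k _ => by rw [hH k])]
  have expand : ∀ k ∈ range (n+1), (-1:ℚ)^k * (n.choose k) * ((n+k).choose k) *
      ((∑ j ∈ Icc 1 n, (j:ℚ)⁻¹) + (∑ i ∈ Icc 1 k, ((n:ℚ)+i)⁻¹) - (∑ j ∈ Icc 1 n, ((k:ℚ)+j)⁻¹))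
      = (∑ j ∈ Icc 1 n, (j:ℚ)⁻¹) * ((-1:ℚ)^k * (n.choose k) * ((n+k).choose k))
        + (-1:ℚ)^k * (n.choose k) * (((n+k).choose k : ℚ) * ∑ i ∈ Icc 1 k, ((n:ℚ)+i)⁻¹)
        - ∑ j ∈ Icc 1 n, (-1:ℚ)^k * (n.choose k) * (((n+k).choose k : ℚ) * ((k:ℚ)+j)⁻¹) := by
    intro k _
    have h3 : ∑ j ∈ Icc 1 n, (-1:ℚ)^k * (n.choose k) * (((n+k).choose k : ℚ) * ((k:ℚ)+j)⁻¹)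
        = (-1:ℚ)^k * (n.choose k) * ((n+k).choose k) * ∑ j ∈ Icc 1 n, ((k:ℚ)+j)⁻¹ := by
      rw [Finset.mul_sum]
      exact Finset.sum_congr rfl fun j _ => by ring
    rw [h3]
    ring
  rw [Finset.sum_congr rfl expand]
  rw [Finset.sum_sub_distrib, Finset.sum_add_distrib, ← Finset.mul_sum, L1 n, L2 n hn,
    Finset.sum_comm]
  have hz : ∀ j ∈ Icc 1 n, ∑ k ∈ range (n+1),
      (-1:ℚ)^k * (n.choose k) * (((n+k).choose k : ℚ) * ((k:ℚ)+j)⁻¹) = 0 := by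
    intro j hj
    exact L3 n j (mem_Icc.mp hj).1 (mem_Icc.mp hj).2
  rw [Finset.sum_congr rfl hz, Finset.sum_const, smul_zero]
  ring
end

section
/- For every positive integer n, sum_{k=1}^n ((-1)^k / k^2) * C(n,k) * C(n+k,k) = -(4 * H_n(1,1) + 2 * H_n(2)), where H_n(1,1) = sum_{1<=i<j<=n} 1/(i*j) and H_n(2) = sum_{j=1}^n 1/j^2. -/
set_option maxRecDepth 4000
open Polynomial Finset

private def Hh (n : ℕ) : ℚ := ∑ j ∈ Icc 1 n, 1/(j:ℚ)
private def Hsq2 (n : ℕ) : ℚ := ∑ j ∈ Icc 1 n, 1/(j:ℚ)^2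
private def Ee2 (n : ℕ) : ℚ := ∑ j ∈ Icc 1 n, ∑ i ∈ Icc 1 (j-1), 1/((i:ℚ)*(j:ℚ))

private lemma Icc_succ (n : ℕ) : Icc 1 (n+1) = insert (n+1) (Icc 1 n) :=
  (Finset.insert_Icc_right_eq_Icc_add_one (by omega)).symm

private lemma notmem_Icc (n : ℕ) : (n+1) ∉ Icc 1 n := by simp

private lemma Hh_succ (n : ℕ) : Hh (n+1) = Hh n + 1/((n:ℚ)+1) := by
  unfold Hh; rw [Icc_succ, Finset.sum_insert (notmem_Icc n)]; push_cast; ring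

private lemma Hsq2_succ (n : ℕ) : Hsq2 (n+1) = Hsq2 n + 1/((n:ℚ)+1)^2 := by
  unfold Hsq2; rw [Icc_succ, Finset.sum_insert (notmem_Icc n)]; push_cast; ring

private lemma Ee2_succ (n : ℕ) : Ee2 (n+1) = Ee2 n + Hh n / ((n:ℚ)+1) := by
  unfold Ee2 Hh
  rw [Icc_succ, Finset.sum_insert (notmem_Icc n)]
  have : (n+1)-1 = n := by omega
  rw [this, Finset.sum_div]
  rw [add_comm]
  congr 1
  apply Finset.sum_congr rfl
  intro i hi
  push_cast
  rw [div_div]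

private lemma Hh_sq (n : ℕ) : Hh n ^ 2 = 2 * Ee2 n + Hsq2 n := by
  induction n with
  | zero => simp [Hh, Hsq2, Ee2]
  | succ n ih =>
    rw [Hh_succ, Hsq2_succ, Ee2_succ]
    have h1 : ((n:ℚ)+1) ≠ 0 := by positivity
    have : (Hh n + 1 / ((n:ℚ) + 1)) ^ 2 = Hh n ^2 + 2*Hh n/((n:ℚ)+1) + 1/((n:ℚ)+1)^2 := by
      field_simp; ring
    rw [this, ih]; ring

private noncomputable def Qp (n : ℕ) : ℚ[X] := ∏ j ∈ Icc 1 n, (X + C (j:ℚ))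
private noncomputable def Rp (n : ℕ) : ℚ[X] := ∏ j ∈ Icc 1 n, (X - C (j:ℚ))
private def p0 (n : ℕ) : ℚ := ∏ j ∈ Icc 1 n, (j:ℚ)

private lemma p0_succ (n : ℕ) : p0 (n+1) = ((n:ℚ)+1) * p0 n := by
  unfold p0; rw [Icc_succ, Finset.prod_insert (notmem_Icc n)]; push_cast; ring

private lemma Qp_succ (n : ℕ) : Qp (n+1) = (X + C ((n:ℚ)+1)) * Qp n := by
  unfold Qp; rw [Icc_succ, Finset.prod_insert (notmem_Icc n)]; push_cast; ring

private lemma Rp_succ (n : ℕ) : Rp (n+1) = (X - C ((n:ℚ)+1)) * Rp n := by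
  unfold Rp; rw [Icc_succ, Finset.prod_insert (notmem_Icc n)]; push_cast; ring

private lemma coeff_lin0 (a : ℚ) (p : ℚ[X]) : ((X + C a) * p).coeff 0 = a * p.coeff 0 := by
  rw [add_mul, coeff_add, coeff_C_mul]
  simp [Polynomial.coeff_X_mul_zero]

private lemma coeff_lin (a : ℚ) (p : ℚ[X]) (d : ℕ) :
    ((X + C a) * p).coeff (d+1) = p.coeff d + a * p.coeff (d+1) := by
  rw [add_mul, coeff_add, coeff_C_mul, coeff_X_mul]

private lemma coeff_lin0' (a : ℚ) (p : ℚ[X]) : ((X - C a) * p).coeff 0 = -a * p.coeff 0 := by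
  have : (X - C a) * p = (X + C (-a)) * p := by rw [map_neg]; ring
  rw [this, coeff_lin0]

private lemma coeff_lin' (a : ℚ) (p : ℚ[X]) (d : ℕ) :
    ((X - C a) * p).coeff (d+1) = p.coeff d + -a * p.coeff (d+1) := by
  have : (X - C a) * p = (X + C (-a)) * p := by rw [map_neg]; ring
  rw [this, coeff_lin]

private lemma Qp_coeffs (n : ℕ) : (Qp n).coeff 0 = p0 n ∧ (Qp n).coeff 1 = p0 n * Hh n ∧
    (Qp n).coeff 2 = p0 n * Ee2 n := by
  induction n with
  | zero => refine ⟨by simp [Qp,p0], ?_, ?_⟩ <;> simp [Qp, Hh, Ee2, Polynomial.coeff_one]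
  | succ n ih =>
    obtain ⟨h0, h1, h2⟩ := ih
    have hn : ((n:ℚ)+1) ≠ 0 := by positivity
    rw [Qp_succ, p0_succ, Hh_succ, Ee2_succ]
    refine ⟨?_, ?_, ?_⟩
    · rw [coeff_lin0, h0]
    · rw [show (1:ℕ) = 0+1 from rfl, coeff_lin, h0, h1]; field_simp; ring
    · rw [show (2:ℕ) = 1+1 from rfl, coeff_lin, h1, h2]; field_simp; ring

private lemma Rp_coeffs (n : ℕ) : (Rp n).coeff 0 = (-1)^n * p0 n ∧
    (Rp n).coeff 1 = -(-1)^n * p0 n * Hh n ∧ (Rp n).coeff 2 = (-1)^n * p0 n * Ee2 n := by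
  induction n with
  | zero => refine ⟨by simp [Rp,p0], ?_, ?_⟩ <;> simp [Rp, Hh, Ee2, Polynomial.coeff_one]
  | succ n ih =>
    obtain ⟨h0, h1, h2⟩ := ih
    have hn : ((n:ℚ)+1) ≠ 0 := by positivity
    rw [Rp_succ, p0_succ, Hh_succ, Ee2_succ]
    refine ⟨?_, ?_, ?_⟩
    · rw [coeff_lin0', h0, pow_succ]; ring
    · rw [show (1:ℕ) = 0+1 from rfl, coeff_lin', h0, h1, pow_succ]; field_simp; ring
    · rw [show (2:ℕ) = 1+1 from rfl, coeff_lin', h1, h2, pow_succ]; field_simp; ring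

private noncomputable def Rkp (n k : ℕ) : ℚ[X] := ∏ j ∈ (Icc 1 n).erase k, (X - C (j:ℚ))

private lemma Qp_monic (n : ℕ) : (Qp n).Monic :=
  monic_prod_of_monic _ _ (fun i _ => monic_X_add_C _)

private lemma Rp_monic (n : ℕ) : (Rp n).Monic :=
  monic_prod_of_monic _ _ (fun i _ => monic_X_sub_C _)

private lemma Rkp_monic (n k : ℕ) : (Rkp n k).Monic :=
  monic_prod_of_monic _ _ (fun i _ => monic_X_sub_C _)

private lemma Qp_natDegree (n : ℕ) : (Qp n).natDegree = n := by
  unfold Qp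
  rw [natDegree_prod _ _ (fun i _ => (monic_X_add_C _).ne_zero)]
  simp only [natDegree_X_add_C, Finset.sum_const, smul_eq_mul, mul_one, Nat.card_Icc]
  omega

private lemma Rp_natDegree (n : ℕ) : (Rp n).natDegree = n := by
  unfold Rp
  rw [natDegree_prod _ _ (fun i _ => X_sub_C_ne_zero _)]
  simp only [natDegree_X_sub_C, Finset.sum_const, smul_eq_mul, mul_one, Nat.card_Icc]
  omega

private lemma Rkp_natDegree (n k : ℕ) (hk : k ∈ Icc 1 n) : (Rkp n k).natDegree = n - 1 := by
  unfold Rkp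
  rw [natDegree_prod _ _ (fun i _ => X_sub_C_ne_zero _)]
  simp only [natDegree_X_sub_C, Finset.sum_const, smul_eq_mul, mul_one, Finset.card_erase_of_mem hk, Nat.card_Icc]
  omega

private lemma Qp_eval (n k : ℕ) :
    (Qp n).eval (k:ℚ) * (k.factorial : ℚ) = ((n+k).factorial : ℚ) := by
  induction n with
  | zero => simp [Qp]
  | succ n ih =>
    rw [Qp_succ, eval_mul]
    push_cast [Nat.factorial_succ, show n+1+k = (n+k)+1 from by omega]
    rw [eval_add, eval_X, eval_C]
    nlinarith [ih]

private lemma prod_left (k : ℕ) (hk : 1 ≤ k) : ∀ m, m < k →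
    (∏ j ∈ Icc 1 m, ((k:ℚ) - j)) * ((k-1-m).factorial : ℚ) = ((k-1).factorial : ℚ) := by
  intro m
  induction m with
  | zero => simp
  | succ m ih =>
    intro h
    rw [Icc_succ, Finset.prod_insert (notmem_Icc m)]
    have h1 : m < k := by omega
    have h2 : ((k:ℚ) - (↑m+1)) = ((k-1-m : ℕ) : ℚ) := by
      have h4 : k - 1 - m + (m+1) = k := by omega
      have h5 := congrArg (Nat.cast : ℕ → ℚ) h4
      push_cast at h5
      linarith
    have h3 : (k-1-m) = (k-1-(m+1)) + 1 := by omega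
    have := ih h1
    rw [h3] at this
    push_cast [Nat.factorial_succ] at this ⊢
    rw [h2]
    push_cast [h3]
    nlinarith [this]

private lemma prod_right (k : ℕ) : ∀ n, k ≤ n →
    (∏ j ∈ Icc (k+1) n, ((k:ℚ) - j)) = (-1)^(n-k) * ((n-k).factorial : ℚ) := by
  intro n
  induction n with
  | zero => intro h; interval_cases k; simp
  | succ n ih =>
    intro h
    rcases Nat.lt_or_ge k (n+1) with h1 | h1
    · have hk : k ≤ n := by omega
      rw [← Finset.insert_Icc_right_eq_Icc_add_one (by omega), Finset.prod_insert (by simp),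
        ih hk]
      have h2 : n + 1 - k = (n - k) + 1 := by omega
      have h3 : ((k:ℚ) - (↑n+1)) = -((n+1-k : ℕ) : ℚ) := by
        have h4 : k + (n+1-k) = n+1 := by omega
        have h5 := congrArg (Nat.cast : ℕ → ℚ) h4
        push_cast at h5
        linarith
      push_cast [h2, Nat.factorial_succ, pow_succ] at h3 ⊢
      rw [h3]
      ring
    · have : k = n+1 := by omega
      subst this
      simp

private lemma erase_split (n k : ℕ) (h1 : 1 ≤ k) (h2 : k ≤ n) :
    (Icc 1 n).erase k = Icc 1 (k-1) ∪ Icc (k+1) n := by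
  ext x
  simp only [Finset.mem_erase, Finset.mem_Icc, Finset.mem_union]
  omega

private lemma Rkp_eval (n k : ℕ) (h1 : 1 ≤ k) (h2 : k ≤ n) :
    (Rkp n k).eval (k:ℚ) = (-1)^(n-k) * ((k-1).factorial : ℚ) * ((n-k).factorial : ℚ) := by
  unfold Rkp
  rw [erase_split n k h1 h2, Finset.prod_union (by
    rw [Finset.disjoint_left]; intro a ha hb
    simp only [Finset.mem_Icc] at ha hb; omega)]
  rw [eval_mul, eval_prod, eval_prod]
  simp only [eval_sub, eval_X, eval_C]
  have hL := prod_left k h1 (k-1) (by omega)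
  have hR := prod_right k n h2
  have : (k-1-(k-1)) = 0 := by omega
  rw [this] at hL
  simp only [Nat.factorial_zero, Nat.cast_one, mul_one] at hL
  rw [hL, hR]
  ring

private def rk (n k : ℕ) : ℚ :=
  (-1)^(n+k) * (n.choose k : ℚ) * ((n+k).choose k : ℚ) / (k:ℚ)^2

private lemma root_identity (n k : ℕ) (h1 : 1 ≤ k) (h2 : k ≤ n) :
    (Qp n).eval (k:ℚ) = (k:ℚ)^3 * rk n k * (Rkp n k).eval (k:ℚ) := by
  have hkf : (k.factorial : ℚ) ≠ 0 := by positivity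
  have hQ := Qp_eval n k
  rw [Rkp_eval n k h1 h2]
  have hc1 : (n.choose k : ℚ) * (k.factorial : ℚ) * ((n-k).factorial : ℚ) = (n.factorial : ℚ) := by
    exact_mod_cast congrArg (Nat.cast : ℕ → ℚ) (Nat.choose_mul_factorial_mul_factorial h2)
  have hc2 : ((n+k).choose k : ℚ) * (k.factorial : ℚ) * (n.factorial : ℚ) = ((n+k).factorial : ℚ) := by
    have := Nat.choose_mul_factorial_mul_factorial (Nat.le_add_left k n)
    rw [show n + k - k = n from by omega] at this
    exact_mod_cast congrArg (Nat.cast : ℕ → ℚ) this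
  have hfk : (k.factorial : ℚ) = (k:ℚ) * ((k-1).factorial : ℚ) := by
    have : k = (k-1) + 1 := by omega
    rw [this]
    push_cast [Nat.factorial_succ]
    ring
  have hsign : ((-1:ℚ))^(n+k) * (-1)^(n-k) = 1 := by
    rw [← pow_add, show n+k+(n-k) = 2*n from by omega, pow_mul]
    norm_num
  unfold rk
  have hk0 : (k:ℚ) ≠ 0 := by positivity
  have hE : (Qp n).eval (k:ℚ) = ((n+k).factorial : ℚ) / (k.factorial : ℚ) :=
    (eq_div_iff hkf).mpr hQ
  rw [hE, div_eq_iff hkf]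
  field_simp
  linear_combination (-hc2 -
    (((n+k).choose k : ℚ) * (k.factorial:ℚ)) * hc1 +
    (((n+k).choose k:ℚ) * (k.factorial:ℚ) * (n.choose k:ℚ) * ((n-k).factorial:ℚ) * ((-1:ℚ)^(n+k) * (-1)^(n-k))) * hfk -
    (((n+k).choose k:ℚ) * (k.factorial:ℚ) * (n.choose k:ℚ) * ((n-k).factorial:ℚ) * (k.factorial:ℚ)) * hsign)

private lemma cXm1 (R : ℚ[X]) : (X * R).coeff 1 = R.coeff 0 := by
  simpa using coeff_X_mul R 0

private lemma cXm2 (R : ℚ[X]) : (X * R).coeff 2 = R.coeff 1 := by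
  simpa using coeff_X_mul R 1

private lemma quad_coeff0 (A B Cc : ℚ) (R : ℚ[X]) :
    ((C A + C B * X + C Cc * X^2) * R).coeff 0 = A * R.coeff 0 := by
  have h : (C A + C B * X + C Cc * X^2) * R = C A * R + C B * (X * R) + C Cc * (X * (X * R)) := by
    ring
  rw [h]
  simp [coeff_C_mul, Polynomial.coeff_X_mul_zero]

private lemma quad_coeff1 (A B Cc : ℚ) (R : ℚ[X]) :
    ((C A + C B * X + C Cc * X^2) * R).coeff 1 = A * R.coeff 1 + B * R.coeff 0 := by
  have h : (C A + C B * X + C Cc * X^2) * R = C A * R + C B * (X * R) + C Cc * (X * (X * R)) := by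
    ring
  rw [h]
  simp only [coeff_add, coeff_C_mul, cXm1, Polynomial.coeff_X_mul_zero, mul_zero, add_zero]

private lemma quad_coeff2 (A B Cc : ℚ) (R : ℚ[X]) :
    ((C A + C B * X + C Cc * X^2) * R).coeff 2 = A * R.coeff 2 + B * R.coeff 1 + Cc * R.coeff 0 := by
  have h : (C A + C B * X + C Cc * X^2) * R = C A * R + C B * (X * R) + C Cc * (X * (X * R)) := by
    ring
  rw [h]
  simp only [coeff_add, coeff_C_mul, cXm1, cXm2]

private lemma quad_coeff_hi (A B Cc : ℚ) (R : ℚ[X]) (d : ℕ) :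
    ((C A + C B * X + C Cc * X^2) * R).coeff (d+2) =
      A * R.coeff (d+2) + B * R.coeff (d+1) + Cc * R.coeff d := by
  have h : (C A + C B * X + C Cc * X^2) * R = C A * R + C B * (X * R) + C Cc * (X^2 * R) := by
    ring
  rw [h]
  simp only [coeff_add, coeff_C_mul]
  rw [show d+2 = (d+1)+1 from rfl, coeff_X_mul, ← coeff_X_pow_mul R 2 d]

private lemma key_sum (n : ℕ) (hn : 1 ≤ n) :
    (-1:ℚ)^n * 2 * (Hh n)^2 + ∑ k ∈ Icc 1 n, rk n k = 0 := by
  set AA : ℚ := (-1:ℚ)^n with hAA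
  set BB : ℚ := (-1:ℚ)^n * 2 * Hh n with hBB
  set CC : ℚ := (-1:ℚ)^n * 2 * (Hh n)^2 with hCC
  set quad : ℚ[X] := C AA + C BB * X + C CC * X^2 with hquad
  set Sp : ℚ[X] := ∑ k ∈ Icc 1 n, C (rk n k) * Rkp n k with hSp
  set Pp : ℚ[X] := Qp n - quad * Rp n - X^3 * Sp with hPp
  have hs : ((-1:ℚ))^n * (-1)^n = 1 := by
    rw [← pow_add]
    exact Even.neg_one_pow ⟨n, by ring⟩
  obtain ⟨hq0, hq1, hq2⟩ := Qp_coeffs n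
  obtain ⟨hr0, hr1, hr2⟩ := Rp_coeffs n
  -- X^3 divides Pp
  have h3 : (X:ℚ[X])^3 ∣ Pp := by
    rw [hPp]
    apply dvd_sub _ (Dvd.intro _ rfl)
    rw [X_pow_dvd_iff]
    intro d hd
    interval_cases d
    · rw [coeff_sub, hq0, quad_coeff0, hr0, hAA]
      linear_combination (-(p0 n)) * hs
    · rw [coeff_sub, hq1, quad_coeff1, hr0, hr1, hAA, hBB]
      linear_combination (p0 n * Hh n) * hs - (2 * p0 n * Hh n) * hs
    · rw [coeff_sub, hq2, quad_coeff2, hr0, hr1, hr2, hAA, hBB, hCC]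
      linear_combination (-(p0 n * Ee2 n)) * hs
  -- roots
  have hroot : ∀ k ∈ Icc 1 n, (X - C ((k:ℕ):ℚ)) ∣ Pp := by
    intro k hk
    simp only [Finset.mem_Icc] at hk
    rw [dvd_iff_isRoot]
    unfold IsRoot
    rw [hPp]
    simp only [eval_sub, eval_mul, eval_pow, eval_X]
    have hRp0 : (Rp n).eval (k:ℚ) = 0 := by
      unfold Rp
      rw [eval_prod]
      apply Finset.prod_eq_zero (Finset.mem_Icc.mpr hk)
      simp
    have hSpe : Sp.eval (k:ℚ) = rk n k * (Rkp n k).eval (k:ℚ) := by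
      rw [hSp, eval_finset_sum]
      rw [Finset.sum_eq_single k]
      · simp
      · intro m hm hmk
        have hkm : k ∈ (Icc 1 n).erase m := Finset.mem_erase.mpr ⟨Ne.symm hmk, Finset.mem_Icc.mpr hk⟩
        have : (Rkp n m).eval (k:ℚ) = 0 := by
          unfold Rkp
          rw [eval_prod]
          exact Finset.prod_eq_zero hkm (by simp)
        simp [this]
      · intro h
        exact absurd (Finset.mem_Icc.mpr hk) h
    rw [hRp0, hSpe, mul_zero, sub_zero, root_identity n k hk.1 hk.2]
    ring
  -- the big divisor
  set f : ℕ → ℚ[X] := fun j => if j = 0 then X^3 else X - C ((j:ℕ):ℚ) with hf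
  have hcop : ∀ a b : ℕ, a ≠ b → IsCoprime ((X:ℚ[X]) - C (a:ℚ)) (X - C (b:ℚ)) :=
    fun a b hab => Polynomial.pairwise_coprime_X_sub_C Nat.cast_injective hab
  have hbig : ∏ j ∈ Icc 0 n, f j ∣ Pp := by
    apply Finset.prod_dvd_of_coprime
    · intro a ha b hb hab
      simp only [Function.onFun, hf]
      rcases eq_or_ne a 0 with rfl | ha0 <;> rcases eq_or_ne b 0 with rfl | hb0
      · exact absurd rfl hab
      · simp only [if_pos rfl, if_neg hb0]
        have h := (hcop 0 b (Ne.symm hb0)).pow_left (m := 3)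
        simpa using h
      · simp only [if_neg ha0, if_pos rfl]
        have h := (hcop a 0 ha0).pow_right (n := 3)
        simpa using h
      · simp only [if_neg ha0, if_neg hb0]
        exact hcop a b hab
    · intro i hi
      simp only [hf]
      rcases eq_or_ne i 0 with rfl | hi0
      · simpa using h3
      · rw [if_neg hi0]
        apply hroot
        simp only [Finset.mem_Icc] at hi ⊢
        omega
  -- degrees
  have hdegPp : Pp.natDegree ≤ n + 2 := by
    rw [hPp]
    apply le_trans (natDegree_sub_le _ _)
    apply max_le
    · apply le_trans (natDegree_sub_le _ _)
      apply max_le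
      · rw [Qp_natDegree]; omega
      · apply le_trans (natDegree_mul_le)
        have hquad2 : quad.natDegree ≤ 2 := by
          rw [hquad]
          apply le_trans (natDegree_add_le _ _)
          apply max_le
          · apply le_trans (natDegree_add_le _ _)
            apply max_le
            · simp
            · apply le_trans (natDegree_mul_le)
              simp [natDegree_C]
          · apply le_trans (natDegree_mul_le)
            simp [natDegree_C, natDegree_X_pow]
        rw [Rp_natDegree]
        omega
    · apply le_trans (natDegree_mul_le)
      have : Sp.natDegree ≤ n - 1 := by
        rw [hSp]
        apply Polynomial.natDegree_sum_le_of_forall_le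
        intro k hk
        apply le_trans (natDegree_mul_le)
        rw [Rkp_natDegree n k hk]
        simp [natDegree_C]
      rw [natDegree_X_pow]
      omega
  have hPp0 : Pp = 0 := by
    by_contra hne
    have hd := natDegree_le_of_dvd hbig hne
    have : (∏ j ∈ Icc 0 n, f j).natDegree = 3 + n := by
      rw [natDegree_prod]
      · rw [show Icc 0 n = insert 0 (Icc 1 n) from by
          ext x; simp only [Finset.mem_Icc, Finset.mem_insert]; omega]
        rw [Finset.sum_insert (by simp)]
        have h1 : ∀ j ∈ Icc 1 n, (f j).natDegree = 1 := by
          intro j hj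
          simp only [Finset.mem_Icc] at hj
          rw [hf]
          simp only [if_neg (by omega : j ≠ 0)]
          exact natDegree_X_sub_C _
        rw [Finset.sum_congr rfl h1]
        simp only [hf, if_pos rfl, natDegree_X_pow, Finset.sum_const, smul_eq_mul, mul_one,
          Nat.card_Icc]
        omega
      · intro i _
        show (if i = 0 then (X:ℚ[X])^3 else X - C ((i:ℕ):ℚ)) ≠ 0
        rcases eq_or_ne i 0 with rfl | h0
        · simp only [if_pos rfl]
          exact pow_ne_zero _ X_ne_zero
        · rw [if_neg h0]
          exact X_sub_C_ne_zero _
    omega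
  -- coefficient extraction at degree n+2
  have heq : Qp n = quad * Rp n + X^3 * Sp := by
    have h0 : Qp n - quad * Rp n - X^3 * Sp = 0 := by rw [← hPp]; exact hPp0
    linear_combination h0
  have hcoeff := congrArg (fun p => p.coeff (n+2)) heq
  simp only [coeff_add] at hcoeff
  rw [coeff_eq_zero_of_natDegree_lt (by rw [Qp_natDegree]; omega)] at hcoeff
  rw [quad_coeff_hi] at hcoeff
  rw [coeff_eq_zero_of_natDegree_lt (by rw [Rp_natDegree]; omega)] at hcoeff
  rw [coeff_eq_zero_of_natDegree_lt (by rw [Rp_natDegree]; omega)] at hcoeff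
  have hRlead : (Rp n).coeff n = 1 := by
    have := (Rp_monic n).coeff_natDegree
    rwa [Rp_natDegree] at this
  rw [hRlead] at hcoeff
  rw [show n+2 = (n-1)+3 from by omega, coeff_X_pow_mul] at hcoeff
  rw [hSp, finset_sum_coeff] at hcoeff
  have hSc : ∀ k ∈ Icc 1 n, (C (rk n k) * Rkp n k).coeff (n-1) = rk n k := by
    intro k hk
    rw [coeff_C_mul]
    have : (Rkp n k).coeff (n-1) = 1 := by
      have := (Rkp_monic n k).coeff_natDegree
      rwa [Rkp_natDegree n k hk] at this
    rw [this, mul_one]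
  rw [Finset.sum_congr rfl hSc] at hcoeff
  rw [hCC]
  linear_combination -hcoeff

theorem stmt_2 (n : ℕ) (hn : 1 ≤ n) :
    ∑ k ∈ Finset.Icc 1 n, ((-1 : ℚ) ^ k / (k : ℚ) ^ 2) * (n.choose k) * ((n + k).choose k) =
    -(4 * ∑ j ∈ Finset.Icc 1 n, ∑ i ∈ Finset.Icc 1 (j - 1), (1 : ℚ) / (i * j) +
      2 * ∑ j ∈ Finset.Icc 1 n, (1 : ℚ) / (j : ℚ) ^ 2) := by
  have hk := key_sum n hn
  have hs : ((-1:ℚ))^n * (-1)^n = 1 := by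
    rw [← pow_add]
    exact Even.neg_one_pow ⟨n, by ring⟩
  have hE : (∑ j ∈ Finset.Icc 1 n, ∑ i ∈ Finset.Icc 1 (j - 1), (1 : ℚ) / (i * j)) = Ee2 n := rfl
  have hH2 : (∑ j ∈ Finset.Icc 1 n, (1 : ℚ) / (j : ℚ) ^ 2) = Hsq2 n := rfl
  have hterm : ∀ k ∈ Icc 1 n,
      ((-1 : ℚ) ^ k / (k : ℚ) ^ 2) * (n.choose k) * ((n + k).choose k) = (-1:ℚ)^n * rk n k := by
    intro k _
    unfold rk
    have hsgn : ((-1:ℚ))^n * (-1)^(n+k) = (-1)^k := by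
      rw [← pow_add, show n+(n+k) = 2*n+k from by ring, pow_add, pow_mul]
      norm_num
    rw [← hsgn]
    ring
  rw [Finset.sum_congr rfl hterm, ← Finset.mul_sum, hE, hH2]
  linear_combination ((-1:ℚ)^n) * hk + (-2*(Hh n)^2) * hs + (-2) * (Hh_sq n)
end

section
/- For every positive integer n, sum_{k=1}^n (-1)^k * C(n,k) * C(n+k,k) * H_k(3) = (-1)^{n-1} * (4 * H_n(1,-2) + 2 * H_n(-3)), where H_k(3) = sum_{j=1}^k 1/j^3, H_n(1,-2) = sum_{1<=i<j<=n} (-1)^j/(i * j^2), and H_n(-3) = sum_{j=1}^n (-1)^j/j^3. -/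
open Finset

namespace Stmt4

noncomputable def b (n k : ℕ) : ℚ := (n.choose k : ℚ)
noncomputable def H1 (n : ℕ) : ℚ := ∑ j ∈ Icc 1 n, 1/(j:ℚ)
noncomputable def H3 (n : ℕ) : ℚ := ∑ j ∈ Icc 1 n, 1/(j:ℚ)^3

lemma b_zero (n : ℕ) : b n 0 = 1 := by simp [b]
lemma b_self (n : ℕ) : b n n = 1 := by simp [b]
lemma b_eq_zero {n k : ℕ} (h : n < k) : b n k = 0 := by simp [b, Nat.choose_eq_zero_of_lt h]
lemma b_pos {n k : ℕ} (h : k ≤ n) : 0 < b n k := by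
  simpa [b] using Nat.choose_pos h

lemma Q1 (n k : ℕ) : b n (k+1) * (k+1) = b n k * ((n:ℚ) - k) := by
  rcases le_or_gt k n with h | h
  · have h1 := Nat.choose_succ_right_eq n k
    have h2 : ((n:ℚ) - k) = ((n - k : ℕ) : ℚ) := by
      rw [Nat.cast_sub h]
    rw [b, b, h2]
    exact_mod_cast congrArg (Nat.cast : ℕ → ℚ) h1
  · rw [b_eq_zero h, b_eq_zero (lt_trans h (Nat.lt_succ_self k))]
    ring

lemma Q2 (n k : ℕ) : ((n:ℚ)+1) * b n k = b (n+1) (k+1) * (k+1) := by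
  have h1 := Nat.add_one_mul_choose_eq n k
  rw [b, b]
  exact_mod_cast congrArg (Nat.cast : ℕ → ℚ) h1

lemma Q3 (n k : ℕ) : b n k * ((n:ℚ)+1) = b (n+1) k * ((n:ℚ)+1-k) := by
  rcases le_or_gt k (n+1) with h | h
  · have h1 := Nat.choose_mul_succ_eq n k
    have h2 : ((n:ℚ)+1-k) = ((n + 1 - k : ℕ) : ℚ) := by
      rw [Nat.cast_sub h]; push_cast; ring
    rw [b, b, h2]
    exact_mod_cast congrArg (Nat.cast : ℕ → ℚ) h1
  · rw [b_eq_zero (lt_of_le_of_lt (Nat.le_succ n) h), b_eq_zero h]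
    ring

lemma H3_succ (n : ℕ) : H3 (n+1) = H3 n + 1/((n:ℚ)+1)^3 := by
  rw [H3, H3, Finset.sum_Icc_succ_top (Nat.le_add_left 1 n)]
  push_cast; ring

lemma H1_succ (n : ℕ) : H1 (n+1) = H1 n + 1/((n:ℚ)+1) := by
  rw [H1, H1, Finset.sum_Icc_succ_top (Nat.le_add_left 1 n)]
  push_cast; ring

lemma icc_to_range (N : ℕ) (f : ℕ → ℚ) : ∑ k ∈ Icc 1 N, f k = ∑ j ∈ range N, f (j+1) := by
  induction N with
  | zero => simp
  | succ N ih =>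
    rw [Finset.sum_Icc_succ_top (Nat.le_add_left 1 N), Finset.sum_range_succ, ih]

-- A2 : classical alternating sum
lemma A2 (n : ℕ) : ∑ k ∈ range (n+1), (-1:ℚ)^k * b n k / (k+1) = 1/((n:ℚ)+1) := by
  have key : ∑ k ∈ range (n+1), (-1:ℚ)^k * b (n+1) (k+1) = 1 := by
    have h0 : ∑ i ∈ range (n+2), (-1:ℚ)^i * b (n+1) i = 0 := by
      have := Int.alternating_sum_range_choose_of_ne (n := n+1) (by omega)
      have : ((∑ i ∈ range (n + 2), (-1 : ℤ) ^ i * ((n+1).choose i : ℤ) : ℤ) : ℚ) = 0 := by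
        rw [this]; simp
      rw [← this]
      push_cast [b]
      rfl
    have h1 : ∑ i ∈ range (n+2), (-1:ℚ)^i * b (n+1) i
        = 1 + ∑ k ∈ range (n+1), (-1:ℚ)^(k+1) * b (n+1) (k+1) := by
      rw [Finset.sum_range_succ' (fun i => (-1:ℚ)^i * b (n+1) i) (n+1)]
      simp [b_zero]
      ring
    have h2 : ∑ k ∈ range (n+1), (-1:ℚ)^(k+1) * b (n+1) (k+1)
        = - ∑ k ∈ range (n+1), (-1:ℚ)^k * b (n+1) (k+1) := by
      rw [← Finset.sum_neg_distrib]
      apply Finset.sum_congr rfl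
      intro k _
      ring
    rw [h1, h2] at h0
    linarith
  have hne : ((n:ℚ)+1) ≠ 0 := by positivity
  calc ∑ k ∈ range (n+1), (-1:ℚ)^k * b n k / (k+1)
      = ∑ k ∈ range (n+1), (-1:ℚ)^k * b (n+1) (k+1) / ((n:ℚ)+1) := by
        apply Finset.sum_congr rfl; intro k _
        have hk : ((k:ℚ)+1) ≠ 0 := by positivity
        field_simp
        linear_combination (Q2 n k)
    _ = 1/((n:ℚ)+1) := by rw [← Finset.sum_div, key]

-- A0' : ∑_{k<n} (-1)^k C(n,k+1)/(k+1) = H1 n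
lemma A0 (n : ℕ) : ∑ k ∈ range n, (-1:ℚ)^k * b n (k+1) / (k+1) = H1 n := by
  induction n with
  | zero => simp [H1]
  | succ n ih =>
    have pascal : ∀ k : ℕ, b (n+1) (k+1) = b n (k+1) + b n k := by
      intro k
      rw [b, b, b, Nat.choose_succ_succ']
      push_cast; ring
    have split : ∑ k ∈ range (n+1), (-1:ℚ)^k * b (n+1) (k+1) / (k+1)
        = (∑ k ∈ range (n+1), (-1:ℚ)^k * b n (k+1) / (k+1))
          + ∑ k ∈ range (n+1), (-1:ℚ)^k * b n k / (k+1) := by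
      rw [← Finset.sum_add_distrib]
      apply Finset.sum_congr rfl; intro k _
      rw [pascal k]; ring
    have top : ∑ k ∈ range (n+1), (-1:ℚ)^k * b n (k+1) / (k+1)
        = ∑ k ∈ range n, (-1:ℚ)^k * b n (k+1) / (k+1) := by
      rw [Finset.sum_range_succ, b_eq_zero (Nat.lt_succ_self n)]
      simp
    rw [split, top, ih, A2, H1_succ]

-- A1 : ∑_t (-1)^t C(s,t)/(t+i+1) = 1/((i+1) C(s+i+1, i+1))
lemma A1 (s : ℕ) : ∀ i : ℕ, ∑ t ∈ range (s+1), (-1:ℚ)^t * b s t / ((t:ℚ)+(i:ℚ)+1)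
    = 1/(((i:ℚ)+1) * b (s+i+1) (i+1)) := by
  induction s with
  | zero => intro i; simp [b_zero, b_self]
  | succ s ih =>
    intro i
    have pascal : ∀ t : ℕ, b (s+1) (t+1) = b s (t+1) + b s t := by
      intro t
      rw [b, b, b, Nat.choose_succ_succ']
      push_cast; ring
    have split : ∑ t ∈ range (s+2), (-1:ℚ)^t * b (s+1) t / ((t:ℚ)+(i:ℚ)+1)
        = (∑ t ∈ range (s+2), (-1:ℚ)^t * b s t / ((t:ℚ)+(i:ℚ)+1))
          - ∑ t ∈ range (s+1), (-1:ℚ)^t * b s t / ((t:ℚ)+(i:ℚ)+2) := by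
      rw [Finset.sum_range_succ' (fun t => (-1:ℚ)^t * b (s+1) t / ((t:ℚ)+(i:ℚ)+1)) (s+1),
          Finset.sum_range_succ' (fun t => (-1:ℚ)^t * b s t / ((t:ℚ)+(i:ℚ)+1)) (s+1)]
      have h1 : ∑ k ∈ range (s+1), (-1:ℚ)^(k+1) * b (s+1) (k+1) / (((k+1:ℕ):ℚ)+(i:ℚ)+1)
          = (∑ k ∈ range (s+1), (-1:ℚ)^(k+1) * b s (k+1) / (((k+1:ℕ):ℚ)+(i:ℚ)+1))
            - ∑ k ∈ range (s+1), (-1:ℚ)^k * b s k / ((k:ℚ)+(i:ℚ)+2) := by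
        rw [← Finset.sum_sub_distrib]
        apply Finset.sum_congr rfl; intro k _
        rw [pascal k]
        push_cast
        ring
      rw [h1, b_zero, b_zero]
      push_cast
      ring
    have first : ∑ t ∈ range (s+2), (-1:ℚ)^t * b s t / ((t:ℚ)+(i:ℚ)+1)
        = 1/(((i:ℚ)+1) * b (s+i+1) (i+1)) := by
      rw [Finset.sum_range_succ, b_eq_zero (Nat.lt_succ_self s)]
      simpa using ih i
    have second : ∑ t ∈ range (s+1), (-1:ℚ)^t * b s t / ((t:ℚ)+(i:ℚ)+2)
        = 1/(((i:ℚ)+2) * b (s+i+2) (i+2)) := by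
      have := ih (i+1)
      push_cast at this
      have e1 : s+(i+1)+1 = s+i+2 := by omega
      rw [e1] at this
      have e4 : b (s+i+2) (i+1+1) = b (s+i+2) (i+2) := rfl
      rw [e4] at this
      rw [show ((i:ℚ)+1+1) = ((i:ℚ)+2) from by ring] at this
      rw [← this]
      apply Finset.sum_congr rfl; intro t _
      ring_nf
    rw [split, first, second]
    have e2 : s+1+i+1 = s+i+2 := by omega
    rw [e2]
    -- algebra
    have hX : (0:ℚ) < b (s+i+1) (i+1) := b_pos (by omega)
    have hY : (0:ℚ) < b (s+i+2) (i+2) := b_pos (by omega)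
    have hZ : (0:ℚ) < b (s+i+2) (i+1) := b_pos (by omega)
    have r1 := Q1 (s+i+2) (i+1)
    have r2 := Q3 (s+i+1) (i+1)
    push_cast at r1 r2
    have e3 : s+i+1+1 = s+i+2 := by omega
    rw [e3] at r2
    have hXe : b (s+i+1) (i+1) = b (s+i+2) (i+1) * ((s:ℚ)+1)/((s:ℚ)+(i:ℚ)+2) := by
      rw [eq_div_iff (by positivity)]
      linear_combination r2
    have hYe : b (s+i+2) (i+2) = b (s+i+2) (i+1) * ((s:ℚ)+1)/((i:ℚ)+2) := by
      rw [eq_div_iff (by positivity)]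
      linear_combination r1
    rw [hXe, hYe]
    have hs1 : ((s:ℚ)+1) ≠ 0 := by positivity
    have hi1 : ((i:ℚ)+1) ≠ 0 := by positivity
    have hi2 : ((i:ℚ)+2) ≠ 0 := by positivity
    have hsi : ((s:ℚ)+(i:ℚ)+2) ≠ 0 := by positivity
    field_simp
    ring

lemma e1' (n j : ℕ) : b (n+j) (j+1) * ((j:ℚ)+1) = b (n+j) j * (n:ℚ) := by
  have h := Q1 (n+j) j
  push_cast at h
  linear_combination h

lemma e2' (n j : ℕ) : b n (j+1) * ((j:ℚ)+1) = b n j * ((n:ℚ)-(j:ℚ)) := by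
  have h := Q1 n j
  push_cast at h
  linear_combination h

lemma e3' (n j : ℕ) : b (n+j+1) (j+1) * (n:ℚ) = b (n+j) (j+1) * ((n:ℚ)+(j:ℚ)+1) := by
  have h := Q3 (n+j) (j+1)
  push_cast at h
  linear_combination -h

lemma star (n j : ℕ) : b n (j+1) * b (n+j) (j+1) * (n:ℚ)^2
    = ((n:ℚ)-(j:ℚ)-1) * (n:ℚ) * b n (j+1) * b (n+j+1) (j+1)
      + ((n:ℚ)-(j:ℚ)) * (n:ℚ) * b n j * b (n+j) j := by
  linear_combination ((j:ℚ)+1) * b n (j+1) * e1' n j + (n:ℚ) * b (n+j) j * e2' n j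
    - ((n:ℚ)-(j:ℚ)-1) * b n (j+1) * e3' n j

noncomputable def Wf (n m : ℕ) : ℚ := (-1:ℚ)^m * (((n:ℚ) - m)/(n:ℚ)) * b n m * b (n+m) m

lemma Wf_zero (n : ℕ) (hn : 1 ≤ n) : Wf n 0 = 1 := by
  have h : (n:ℚ) ≠ 0 := Nat.cast_ne_zero.mpr (by omega)
  simp [Wf, b_zero, div_self h]

lemma Wf_self (n : ℕ) : Wf n n = 0 := by
  simp [Wf]

lemma lemT (n : ℕ) (hn : 1 ≤ n) (j : ℕ) :
    (-1:ℚ)^(j+1) * b n (j+1) * b (n+j) (j+1) = Wf n (j+1) - Wf n j := by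
  have hn0 : (n:ℚ) ≠ 0 := by
    have : (0:ℚ) < n := by exact_mod_cast hn
    positivity
  have hZ : b (n+j) j = b (n+j) (j+1) * ((j:ℚ)+1)/n := by
    rw [eq_div_iff hn0]; linear_combination -(e1' n j)
  have hX : b (n+j+1) (j+1) = b (n+j) (j+1) * ((n:ℚ)+(j:ℚ)+1)/n := by
    rw [eq_div_iff hn0]; linear_combination e3' n j
  simp only [Wf]
  rw [show n+(j+1) = n+j+1 from by omega]
  rw [hX, hZ]
  push_cast
  field_simp
  linear_combination (-((-1:ℚ)^j) * ((j:ℚ)+1) * b (n+j) (j+1)) * e2' n j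

lemma telesc (n : ℕ) (hn : 1 ≤ n) :
    ∑ k ∈ range n, (-1:ℚ)^k * b n (k+1) * b (n+k) (k+1) = 1 := by
  have h : ∑ k ∈ range n, (Wf n (k+1) - Wf n k) = -1 := by
    rw [Finset.sum_range_sub (Wf n) n, Wf_self, Wf_zero n hn]; ring
  have h2 : ∑ k ∈ range n, (-1:ℚ)^(k+1) * b n (k+1) * b (n+k) (k+1) = -1 := by
    rw [Finset.sum_congr rfl (fun k _ => lemT n hn k)]
    exact h
  have h3 : ∑ k ∈ range n, (-1:ℚ)^k * b n (k+1) * b (n+k) (k+1)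
      = - ∑ k ∈ range n, (-1:ℚ)^(k+1) * b n (k+1) * b (n+k) (k+1) := by
    rw [← Finset.sum_neg_distrib]
    exact Finset.sum_congr rfl (fun k _ => by ring)
  rw [h3, h2]; norm_num

lemma lemB (n : ℕ) (hn : 1 ≤ n) :
    ∑ k ∈ range n, (-1:ℚ)^k * b n (k+1) * b (n+k+1) (k+1) / ((n:ℚ)+(k:ℚ)+1) = 1/(n:ℚ) := by
  have hn0 : (n:ℚ) ≠ 0 := Nat.cast_ne_zero.mpr (by omega)
  have step : ∀ k ∈ range n, (-1:ℚ)^k * b n (k+1) * b (n+k+1) (k+1) / ((n:ℚ)+(k:ℚ)+1)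
      = ((-1:ℚ)^k * b n (k+1) * b (n+k) (k+1)) * (1/(n:ℚ)) := by
    intro k _
    have hX : b (n+k+1) (k+1) = b (n+k) (k+1) * ((n:ℚ)+(k:ℚ)+1)/n := by
      rw [eq_div_iff hn0]; linear_combination e3' n k
    rw [hX]
    have hd : ((n:ℚ)+(k:ℚ)+1) ≠ 0 := by positivity
    field_simp
  rw [Finset.sum_congr rfl step, ← Finset.sum_mul, telesc n hn]
  ring

lemma vand (a c : ℕ) : b (a+c) c = ∑ i ∈ range (c+1), b a i * b c i := by
  have h := Nat.add_choose_eq a c c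
  rw [Finset.Nat.sum_antidiagonal_eq_sum_range_succ_mk] at h
  rw [b, h]
  push_cast
  apply Finset.sum_congr rfl; intro k hk
  simp only [Finset.mem_range] at hk
  rw [b, b, Nat.choose_symm (by omega)]

lemma inner (s i : ℕ) :
    ∑ k ∈ range (i+1+s), (-1:ℚ)^k * b (i+1+s) (k+1) * b (k+1) (i+1) / ((k:ℚ)+1)
      = (-1:ℚ)^i/((i:ℚ)+1) := by
  have e0 : i+1+s = i + (s+1) := by omega
  rw [e0, Finset.sum_range_add]
  have z1 : ∑ k ∈ range i, (-1:ℚ)^k * b (i+(s+1)) (k+1) * b (k+1) (i+1) / ((k:ℚ)+1) = 0 := by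
    apply Finset.sum_eq_zero; intro k hk
    simp only [Finset.mem_range] at hk
    rw [b_eq_zero (show k+1 < i+1 by omega)]
    ring
  rw [z1, zero_add]
  have key : ∀ t ∈ range (s+1),
      (-1:ℚ)^(i+t) * b (i+(s+1)) (i+t+1) * b (i+t+1) (i+1) / (((i+t:ℕ):ℚ)+1)
        = ((-1:ℚ)^i * b (i+(s+1)) (i+1)) * ((-1:ℚ)^t * b s t / ((t:ℚ)+(i:ℚ)+1)) := by
    intro t ht
    simp only [Finset.mem_range] at ht
    have hc := Nat.choose_mul (n := i+(s+1)) (k := i+t+1) (s := i+1) (by omega)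
    have hc' : b (i+(s+1)) (i+t+1) * b (i+t+1) (i+1) = b (i+(s+1)) (i+1) * b s t := by
      have e1 : i+(s+1) - (i+1) = s := by omega
      have e2 : i+t+1 - (i+1) = t := by omega
      rw [e1, e2] at hc
      rw [b, b, b, b, ← Nat.cast_mul, ← Nat.cast_mul, hc]
    have hd : ((i:ℚ)+(t:ℚ)+1) ≠ 0 := by positivity
    push_cast
    rw [pow_add]
    field_simp
    linear_combination (((t:ℚ)+(i:ℚ)+1)) * hc'
  rw [Finset.sum_congr rfl key, ← Finset.mul_sum, A1 s i]
  have e5 : s+i+1 = i+(s+1) := by omega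
  rw [e5]
  have hb : (0:ℚ) < b (i+(s+1)) (i+1) := b_pos (by omega)
  have hi : ((i:ℚ)+1) ≠ 0 := by positivity
  field_simp

lemma lemA (n : ℕ) :
    ∑ k ∈ range n, (-1:ℚ)^k * b n (k+1) * b (n+k+1) (k+1) / ((k:ℚ)+1) = 2 * H1 n := by
  have expand : ∀ k ∈ range n, (-1:ℚ)^k * b n (k+1) * b (n+k+1) (k+1) / ((k:ℚ)+1)
      = ∑ i ∈ range (n+1), (-1:ℚ)^k * b n (k+1) * (b n i * b (k+1) i) / ((k:ℚ)+1) := by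
    intro k hk
    simp only [Finset.mem_range] at hk
    have hv : b (n+(k+1)) (k+1) = ∑ i ∈ range (k+2), b n i * b (k+1) i := vand n (k+1)
    have hv2 : b (n+(k+1)) (k+1) = ∑ i ∈ range (n+1), b n i * b (k+1) i := by
      rcases le_or_gt (k+2) (n+1) with h | h
      · rw [hv]
        apply Finset.sum_subset (Finset.range_subset_range.mpr h)
        intro x hx hnx
        simp only [Finset.mem_range] at hx hnx
        rw [b_eq_zero (show k+1 < x by omega)]
        ring
      · rw [hv]
        symm
        apply Finset.sum_subset (Finset.range_subset_range.mpr (by omega))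
        intro x hx hnx
        simp only [Finset.mem_range] at hx hnx
        rw [b_eq_zero (show n < x by omega)]
        ring
    rw [show n+k+1 = n+(k+1) from by omega, hv2, Finset.mul_sum, Finset.sum_div]
    try (apply Finset.sum_congr rfl; intro i _; ring)
  rw [Finset.sum_congr rfl expand, Finset.sum_comm]
  rw [Finset.sum_range_succ' (fun i => ∑ k ∈ range n, (-1:ℚ)^k * b n (k+1) * (b n i * b (k+1) i) / ((k:ℚ)+1)) n]
  have pc0 : ∑ k ∈ range n, (-1:ℚ)^k * b n (k+1) * (b n 0 * b (k+1) 0) / ((k:ℚ)+1) = H1 n := by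
    rw [← A0 n]
    apply Finset.sum_congr rfl; intro k _
    rw [b_zero, b_zero]; ring
  have pc1 : ∑ i ∈ range n, ∑ k ∈ range n, (-1:ℚ)^k * b n (k+1) * (b n (i+1) * b (k+1) (i+1)) / ((k:ℚ)+1) = H1 n := by
    have step2 : ∀ i ∈ range n,
        (∑ k ∈ range n, (-1:ℚ)^k * b n (k+1) * (b n (i+1) * b (k+1) (i+1)) / ((k:ℚ)+1))
          = (-1:ℚ)^i * b n (i+1) / ((i:ℚ)+1) := by
      intro i hi
      simp only [Finset.mem_range] at hi
      obtain ⟨s, hs⟩ : ∃ s, n = i+1+s := ⟨n-i-1, by omega⟩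
      subst hs
      have h := inner s i
      calc ∑ k ∈ range (i+1+s), (-1:ℚ)^k * b (i+1+s) (k+1) * (b (i+1+s) (i+1) * b (k+1) (i+1)) / ((k:ℚ)+1)
          = b (i+1+s) (i+1) * ∑ k ∈ range (i+1+s), (-1:ℚ)^k * b (i+1+s) (k+1) * b (k+1) (i+1) / ((k:ℚ)+1) := by
            rw [Finset.mul_sum]
            apply Finset.sum_congr rfl; intro k _; ring
        _ = b (i+1+s) (i+1) * ((-1:ℚ)^i/((i:ℚ)+1)) := by rw [h]
        _ = (-1:ℚ)^i * b (i+1+s) (i+1) / ((i:ℚ)+1) := by ring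
    rw [Finset.sum_congr rfl step2, ← A0 n]
    try (apply Finset.sum_congr rfl; intro i _; ring)
  rw [pc0, pc1]
  ring

lemma lemM (n : ℕ) (hn : 1 ≤ n) :
    ∑ k ∈ range n, (-1:ℚ)^k * b n (k+1) * b (n+k) (k+1) / ((k:ℚ)+1) = 2 * H1 n - 1/(n:ℚ) := by
  have hn0 : (n:ℚ) ≠ 0 := Nat.cast_ne_zero.mpr (by omega)
  have step : ∀ k ∈ range n, (-1:ℚ)^k * b n (k+1) * b (n+k) (k+1) / ((k:ℚ)+1)
      = (-1:ℚ)^k * b n (k+1) * b (n+k+1) (k+1) / ((k:ℚ)+1)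
        - (-1:ℚ)^k * b n (k+1) * b (n+k+1) (k+1) / ((n:ℚ)+(k:ℚ)+1) := by
    intro k _
    have hX : b (n+k+1) (k+1) = b (n+k) (k+1) * ((n:ℚ)+(k:ℚ)+1)/n := by
      rw [eq_div_iff hn0]; linear_combination e3' n k
    rw [hX]
    have hd1 : ((n:ℚ)+(k:ℚ)+1) ≠ 0 := by positivity
    have hd2 : ((k:ℚ)+1) ≠ 0 := by positivity
    field_simp
    ring
  rw [Finset.sum_congr rfl step, Finset.sum_sub_distrib, lemA n, lemB n hn]

lemma abel (f g : ℕ → ℚ) (N : ℕ) :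
    ∑ j ∈ range N, (f (j+1) - f j) * g (j+1)
      = f N * g N - f 0 * g 0 - ∑ j ∈ range N, f j * (g (j+1) - g j) := by
  induction N with
  | zero => simp
  | succ N ih => rw [Finset.sum_range_succ, Finset.sum_range_succ, ih]; ring

lemma merge (m j : ℕ) :
    b (m+1) (j+1) * b (m+j+2) (j+1) + b m (j+1) * b (m+j+1) (j+1)
      = 2 * b (m+1) (j+1) * b (m+j+1) (j+1) := by
  have h1 : ((m:ℚ)+1) ≠ 0 := by positivity
  have ra : b (m+j+2) (j+1) * ((m:ℚ)+1) = b (m+j+1) (j+1) * ((m:ℚ)+(j:ℚ)+2) := by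
    have h := e3' (m+1) j
    rw [show m+1+j+1 = m+j+2 from by omega, show m+1+j = m+j+1 from by omega] at h
    push_cast at h
    linear_combination h
  have rb : b m (j+1) * ((m:ℚ)+1) = b (m+1) (j+1) * ((m:ℚ)-(j:ℚ)) := by
    have h := Q3 m (j+1)
    push_cast at h
    linear_combination h
  refine mul_left_cancel₀ h1 (mul_left_cancel₀ h1 ?_)
  linear_combination ((m:ℚ)+1) * b (m+1) (j+1) * ra + ((m:ℚ)+1) * b (m+j+1) (j+1) * rb

lemma wterm (n j : ℕ) (hn : 1 ≤ n) :
    Wf n j * (1/((j:ℚ)+1)^3)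
      = (1/(n:ℚ)^2) * ((-1:ℚ)^j * b n (j+1) * b (n+j) (j+1) / ((j:ℚ)+1)) := by
  have hn0 : (n:ℚ) ≠ 0 := Nat.cast_ne_zero.mpr (by omega)
  have hform : Wf n j = (-1:ℚ)^j * ((b n j * ((n:ℚ)-(j:ℚ))) * (b (n+j) j * (n:ℚ))) / ((n:ℚ)^2) := by
    rw [Wf]; field_simp
  rw [hform, ← e2' n j, ← e1' n j]
  have hj : ((j:ℚ)+1) ≠ 0 := by positivity
  field_simp

noncomputable def Sq (n : ℕ) : ℚ :=
  ∑ k ∈ Finset.Icc 1 n, (-1:ℚ)^k * (n.choose k) * ((n+k).choose k) *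
    (∑ j ∈ Finset.Icc 1 k, (1:ℚ)/(j:ℚ)^3)

lemma Sq_eq (n : ℕ) : Sq n = ∑ k ∈ Icc 1 n, (-1:ℚ)^k * b n k * b (n+k) k * H3 k := rfl

lemma key (m : ℕ) :
    Sq (m+1) + Sq m = -4 * H1 m/((m:ℚ)+1)^2 - 2/((m:ℚ)+1)^3 := by
  have hn0 : ((m:ℚ)+1) ≠ 0 := by positivity
  have c1 : Sq (m+1) = ∑ j ∈ range (m+1),
      (-1:ℚ)^(j+1) * b (m+1) (j+1) * b (m+j+2) (j+1) * H3 (j+1) := by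
    rw [Sq_eq, icc_to_range (m+1) (fun k => (-1:ℚ)^k * b (m+1) k * b (m+1+k) k * H3 k)]
    apply Finset.sum_congr rfl; intro j _
    rw [show m+1+(j+1) = m+j+2 from by omega]
  have c2 : Sq m = ∑ j ∈ range (m+1),
      (-1:ℚ)^(j+1) * b m (j+1) * b (m+j+1) (j+1) * H3 (j+1) := by
    rw [Sq_eq, icc_to_range m (fun k => (-1:ℚ)^k * b m k * b (m+k) k * H3 k)]
    rw [Finset.sum_range_succ]
    rw [b_eq_zero (show m < m+1 from by omega)]
    rw [show ∀ x:ℚ, (-1:ℚ)^(m+1) * 0 * x * H3 (m+1) = 0 from fun x => by ring]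
    rw [add_zero]
    apply Finset.sum_congr rfl; intro j _
    rw [show m+(j+1) = m+j+1 from by omega]
  have c3 : Sq (m+1) + Sq m = ∑ j ∈ range (m+1),
      2 * ((Wf (m+1) (j+1) - Wf (m+1) j) * H3 (j+1)) := by
    rw [c1, c2, ← Finset.sum_add_distrib]
    apply Finset.sum_congr rfl; intro j _
    have hm := merge m j
    have ht := lemT (m+1) (by omega) j
    rw [show m+1+j = m+j+1 from by omega] at ht
    calc (-1:ℚ)^(j+1) * b (m+1) (j+1) * b (m+j+2) (j+1) * H3 (j+1)
          + (-1:ℚ)^(j+1) * b m (j+1) * b (m+j+1) (j+1) * H3 (j+1)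
        = ((-1:ℚ)^(j+1) * (b (m+1) (j+1) * b (m+j+2) (j+1) + b m (j+1) * b (m+j+1) (j+1))) * H3 (j+1) := by ring
      _ = ((-1:ℚ)^(j+1) * (2 * b (m+1) (j+1) * b (m+j+1) (j+1))) * H3 (j+1) := by rw [hm]
      _ = 2 * (((-1:ℚ)^(j+1) * b (m+1) (j+1) * b (m+j+1) (j+1)) * H3 (j+1)) := by ring
      _ = 2 * ((Wf (m+1) (j+1) - Wf (m+1) j) * H3 (j+1)) := by rw [ht]
  rw [c3, ← Finset.mul_sum, abel (Wf (m+1)) H3 (m+1), Wf_self]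
  have hH30 : H3 0 = 0 := by simp [H3]
  rw [hH30]
  have c4 : ∑ j ∈ range (m+1), Wf (m+1) j * (H3 (j+1) - H3 j)
      = (1/((m+1:ℕ):ℚ)^2) * (2 * H1 (m+1) - 1/((m+1:ℕ):ℚ)) := by
    have step : ∀ j ∈ range (m+1), Wf (m+1) j * (H3 (j+1) - H3 j)
        = (1/((m+1:ℕ):ℚ)^2) * ((-1:ℚ)^j * b (m+1) (j+1) * b (m+1+j) (j+1) / ((j:ℚ)+1)) := by
      intro j _
      rw [H3_succ j]
      rw [show H3 j + 1/((j:ℚ)+1)^3 - H3 j = 1/((j:ℚ)+1)^3 from by ring]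
      exact wterm (m+1) j (by omega)
    rw [Finset.sum_congr rfl step, ← Finset.mul_sum]
    congr 1
    have := lemM (m+1) (by omega)
    rw [← this]
    try (apply Finset.sum_congr rfl; intro j _; rw [show m+1+j = m+j+1 from by omega])
  rw [c4]
  have hH1 : H1 (m+1) = H1 m + 1/((m:ℚ)+1) := by
    have := H1_succ m
    rw [this]
  rw [hH1]
  push_cast
  field_simp
  ring

noncomputable def Rhs (n : ℕ) : ℚ :=
  (-1:ℚ)^(n-1) *
    (4 * ∑ j ∈ Finset.Icc 1 n, ∑ i ∈ Finset.Icc 1 (j-1), (-1:ℚ)^j/(i*(j:ℚ)^2) +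
     2 * ∑ j ∈ Finset.Icc 1 n, (-1:ℚ)^j/(j:ℚ)^3)

lemma rhs_rec (m : ℕ) :
    Rhs (m+2) + Rhs (m+1) = -4 * H1 (m+1)/((m:ℚ)+2)^2 - 2/((m:ℚ)+2)^3 := by
  set X : ℕ → ℚ := fun n => ∑ j ∈ Finset.Icc 1 n, ∑ i ∈ Finset.Icc 1 (j-1), (-1:ℚ)^j/(i*(j:ℚ)^2) with hX
  set Y : ℕ → ℚ := fun n => ∑ j ∈ Finset.Icc 1 n, (-1:ℚ)^j/(j:ℚ)^3 with hY
  have hXd : X (m+2) = X (m+1) + (-1:ℚ)^(m+2)/((m:ℚ)+2)^2 * H1 (m+1) := by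
    rw [hX]
    simp only
    rw [Finset.sum_Icc_succ_top (show 1 ≤ m+2 from by omega)]
    congr 1
    rw [show m+2-1 = m+1 from by omega]
    rw [H1, Finset.mul_sum]
    apply Finset.sum_congr rfl; intro i _
    push_cast
    field_simp
    ring
  have hYd : Y (m+2) = Y (m+1) + (-1:ℚ)^(m+2)/((m:ℚ)+2)^3 := by
    rw [hY]
    simp only
    rw [Finset.sum_Icc_succ_top (show 1 ≤ m+2 from by omega)]
    push_cast
    ring
  have e1 : Rhs (m+2) = (-1:ℚ)^(m+1) * (4 * X (m+2) + 2 * Y (m+2)) := by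
    rw [Rhs, show m+2-1 = m+1 from by omega]
  have e2 : Rhs (m+1) = (-1:ℚ)^m * (4 * X (m+1) + 2 * Y (m+1)) := by
    rw [Rhs, show m+1-1 = m from by omega]
  rw [e1, e2, hXd, hYd]
  have hd : ((m:ℚ)+2) ≠ 0 := by positivity
  have ht2 : ((-1:ℚ)^m)^2 = 1 := by
    rw [← pow_mul, mul_comm, pow_mul]
    norm_num
  field_simp
  linear_combination (-(4*(m:ℚ)*H1 (m+1) + 8*H1 (m+1) + 2)) * ht2

lemma main (m : ℕ) : Sq (m+1) = Rhs (m+1) := by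
  induction m with
  | zero =>
    rw [Sq, Rhs]
    norm_num [Finset.Icc_self]
  | succ m ih =>
    have hk := key (m+1)
    have hr := rhs_rec m
    have hcast : ((m+1:ℕ):ℚ) = (m:ℚ)+1 := by push_cast; ring
    rw [hcast] at hk
    have h1 : H1 (m+1) = H1 (m+1) := rfl
    -- hk : Sq (m+2) + Sq (m+1) = -4*H1 (m+1)/((m:ℚ)+1+1)^2 - 2/((m:ℚ)+1+1)^3
    have : Sq (m+2) = Rhs (m+2) := by
      have := hk
      rw [ih] at this
      have h2 : Sq (m+2) = -4*H1 (m+1)/((m:ℚ)+1+1)^2 - 2/((m:ℚ)+1+1)^3 - Rhs (m+1) := by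
        linarith
      rw [h2]
      have h3 : Rhs (m+2) = -4 * H1 (m+1)/((m:ℚ)+2)^2 - 2/((m:ℚ)+2)^3 - Rhs (m+1) := by
        linarith
      rw [h3]
      ring_nf
    exact this

end Stmt4

theorem stmt_4 (n : ℕ) (hn : 1 ≤ n) :
    ∑ k ∈ Finset.Icc 1 n, (-1 : ℚ) ^ k * (n.choose k) * ((n + k).choose k) *
      (∑ j ∈ Finset.Icc 1 k, (1 : ℚ) / (j : ℚ) ^ 3) =
    (-1 : ℚ) ^ (n - 1) *
      (4 * ∑ j ∈ Finset.Icc 1 n, ∑ i ∈ Finset.Icc 1 (j - 1), (-1 : ℚ) ^ j / (i * (j : ℚ) ^ 2) +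
       2 * ∑ j ∈ Finset.Icc 1 n, (-1 : ℚ) ^ j / (j : ℚ) ^ 3) := by
  obtain ⟨m, rfl⟩ : ∃ m, n = m+1 := ⟨n-1, by omega⟩
  exact Stmt4.main m
end

section
/- For every positive integer n, 2 * sum_{k=1}^n ((-1)^k / k^2) * C(n,k) / C(n+k,k) = - sum_{j=1}^n 1/j^2. -/
noncomputable def tt (n k : ℕ) : ℚ :=
  ((-1 : ℚ) ^ k / (k : ℚ) ^ 2) * ((n.choose k : ℚ) / ((n + k).choose k))

noncomputable def Hc (n k : ℕ) : ℚ :=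
  (-1 : ℚ) ^ k * ((2*n+1).choose (n+1+k) : ℚ) * (n.factorial : ℚ)^2 / ((2*n+2).factorial : ℚ)

lemma key (n m : ℕ) (hm : m ≤ n) :
    tt (n+1) (m+1) - tt n (m+1) = Hc n (m+1) - Hc n m := by
  rcases Nat.lt_or_ge m n with h | h
  · obtain ⟨j, rfl⟩ : ∃ j, n = m + 1 + j := ⟨n - (m+1), by omega⟩
    unfold tt Hc
    rw [Nat.cast_choose ℚ (show m+1 ≤ m+1+j by omega),
        Nat.cast_choose ℚ (show m+1 ≤ (m+1+j) + (m+1) by omega),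
        Nat.cast_choose ℚ (show m+1 ≤ (m+1+j)+1 by omega),
        Nat.cast_choose ℚ (show m+1 ≤ ((m+1+j)+1) + (m+1) by omega),
        Nat.cast_choose ℚ (show (m+1+j)+1+(m+1) ≤ 2*(m+1+j)+1 by omega),
        Nat.cast_choose ℚ (show (m+1+j)+1+m ≤ 2*(m+1+j)+1 by omega)]
    have e1 : m+1+j - (m+1) = j := by omega
    have e2 : (m+1+j)+(m+1) - (m+1) = m+1+j := by omega
    have e3 : (m+1+j)+1 - (m+1) = j+1 := by omega
    have e4 : (m+1+j)+1+(m+1) - (m+1) = m+j+2 := by omega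
    have e5 : 2*(m+1+j)+1 - ((m+1+j)+1+(m+1)) = j := by omega
    have e6 : 2*(m+1+j)+1 - ((m+1+j)+1+m) = j+1 := by omega
    rw [e1, e2, e3, e4, e5, e6]
    have f1 : ((m+1+j)+1+(m+1)) = (2*m+j+3) := by omega
    have f2 : ((m+1+j)+1+m) = (2*m+j+2) := by omega
    have f3 : ((m+1+j)+(m+1)) = (2*m+j+2) := by omega
    have f4 : ((m+1+j)+1) = (m+j+2) := by omega
    have f5 : (2*(m+1+j)+2) = (2*m+2*j+4) := by omega
    rw [f1, f2, f3, f4, f5]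
    -- factorial expansions
    have g1 : ((m+j+2).factorial : ℚ) = (m+j+2) * (m+1+j).factorial := by
      rw [show m+j+2 = (m+1+j)+1 by omega, Nat.factorial_succ]; push_cast; ring
    have g2 : ((2*m+j+3).factorial : ℚ) = (2*m+j+3) * (2*m+j+2).factorial := by
      rw [show 2*m+j+3 = (2*m+j+2)+1 by omega, Nat.factorial_succ]; push_cast; ring
    have g3 : ((j+1).factorial : ℚ) = (j+1) * j.factorial := by
      rw [Nat.factorial_succ]; push_cast; ring
    have g4 : ((2*m+2*j+4).factorial : ℚ) = (2*m+2*j+4) * (2*(m+1+j)+1).factorial := by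
      rw [show 2*m+2*j+4 = (2*(m+1+j)+1)+1 by omega, Nat.factorial_succ]; push_cast; ring
    rw [g1, g2, g3, g4]
    have p1 : ((m+1).factorial : ℚ) ≠ 0 := by positivity
    have p2 : (j.factorial : ℚ) ≠ 0 := by positivity
    have p3 : ((m+1+j).factorial : ℚ) ≠ 0 := by positivity
    have p4 : ((2*m+j+2).factorial : ℚ) ≠ 0 := by positivity
    have p5 : ((2*(m+1+j)+1).factorial : ℚ) ≠ 0 := by positivity
    have q1 : ((m:ℚ)+1) ≠ 0 := by positivity
    push_cast
    field_simp
    ring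
  · have hmn : m = n := le_antisymm hm h
    subst hmn
    unfold tt Hc
    have z1 : (m.choose (m+1) : ℚ) = 0 := by
      rw [Nat.choose_eq_zero_of_lt (by omega)]; norm_num
    have z2 : ((2*m+1).choose (m+1+(m+1)) : ℚ) = 0 := by
      rw [Nat.choose_eq_zero_of_lt (by omega)]; norm_num
    have z3 : (2*m+1).choose (m+1+m) = 1 := by
      rw [show m+1+m = 2*m+1 by omega, Nat.choose_self]
    rw [z1, z2, z3]
    rw [Nat.cast_choose ℚ (show m+1 ≤ (m+1)+(m+1) by omega)]
    have e : (m+1)+(m+1) - (m+1) = m+1 := by omega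
    rw [e]
    have g1 : (m+1)+(m+1) = 2*m+2 := by omega
    have g2 : ((m+1).factorial : ℚ) = (m+1) * m.factorial := by
      rw [Nat.factorial_succ]; push_cast; ring
    rw [g1, g2]
    rw [Nat.choose_self]
    have p1 : ((m:ℚ)+1) ≠ 0 := by positivity
    have p2 : (m.factorial : ℚ) ≠ 0 := by positivity
    have p3 : (((2*m+2).factorial : ℚ)) ≠ 0 := by positivity
    push_cast
    field_simp
    ring

lemma Hc_top (n : ℕ) : Hc n (n+1) = 0 := by
  unfold Hc
  rw [Nat.choose_eq_zero_of_lt (by omega)]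
  norm_num

lemma Hc_zero (n : ℕ) : Hc n 0 = 1 / (2*((n:ℚ)+1)^2) := by
  unfold Hc
  rw [Nat.cast_choose ℚ (show n+1+0 ≤ 2*n+1 by omega)]
  have e : 2*n+1 - (n+1+0) = n := by omega
  rw [e]
  have g1 : ((2*n+2).factorial : ℚ) = (2*n+2) * (2*n+1).factorial := by
    rw [show 2*n+2 = (2*n+1)+1 by omega, Nat.factorial_succ]; push_cast; ring
  have g2 : ((n+1+0).factorial : ℚ) = (n+1) * n.factorial := by
    norm_num [Nat.factorial_succ]
  rw [g1, g2]
  have p1 : ((n:ℚ)+1) ≠ 0 := by positivity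
  have p2 : (n.factorial : ℚ) ≠ 0 := by positivity
  have p3 : (((2*n+1).factorial : ℚ)) ≠ 0 := by positivity
  field_simp

lemma step (n : ℕ) :
    (∑ k ∈ Finset.Icc 1 (n+1), tt (n+1) k)
      = (∑ k ∈ Finset.Icc 1 n, tt n k) - 1/(2*((n:ℚ)+1)^2) := by
  have h0 : tt n (n+1) = 0 := by
    unfold tt
    rw [Nat.choose_eq_zero_of_lt (by omega)]
    norm_num
  have h1 : (∑ k ∈ Finset.Icc 1 (n+1), tt n k) = ∑ k ∈ Finset.Icc 1 n, tt n k := by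
    rw [Finset.sum_Icc_succ_top (by omega), h0, add_zero]
  have h2 : (∑ k ∈ Finset.Icc 1 (n+1), (tt (n+1) k - tt n k))
      = Hc n (n+1) - Hc n 0 := by
    have : Finset.Icc 1 (n+1) = Finset.Ico 1 (n+2) := by
      rw [← Finset.Ico_add_one_right_eq_Icc]; rfl
    rw [this, Finset.sum_Ico_eq_sum_range]
    have e : n + 2 - 1 = n + 1 := by omega
    rw [e]
    rw [show (∑ i ∈ Finset.range (n+1), (tt (n+1) (1+i) - tt n (1+i)))
        = ∑ i ∈ Finset.range (n+1), (Hc n (i+1) - Hc n i) from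
      Finset.sum_congr rfl (fun i hi => by
        rw [show 1+i = i+1 by omega]
        exact key n i (by simpa using Nat.lt_succ_iff.mp (Finset.mem_range.mp hi)))]
    exact Finset.sum_range_sub (Hc n) (n+1)
  have := Finset.sum_sub_distrib (s := Finset.Icc 1 (n+1)) (f := tt (n+1)) (g := tt n)
  rw [Finset.sum_sub_distrib, h1] at h2
  rw [Hc_top, Hc_zero, zero_sub] at h2
  linarith

theorem stmt_5 (n : ℕ) (hn : 1 ≤ n) :
    2 * ∑ k ∈ Finset.Icc 1 n, ((-1 : ℚ) ^ k / (k : ℚ) ^ 2) *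
      ((n.choose k : ℚ) / ((n + k).choose k)) =
    -∑ j ∈ Finset.Icc 1 n, (1 : ℚ) / (j : ℚ) ^ 2 := by
  have main : ∀ n : ℕ, 1 ≤ n →
      2 * (∑ k ∈ Finset.Icc 1 n, tt n k) = -∑ j ∈ Finset.Icc 1 n, (1 : ℚ) / (j : ℚ) ^ 2 := by
    intro n hn
    induction n with
    | zero => omega
    | succ m ih =>
      rcases Nat.eq_or_lt_of_le hn with h | h
      · simp only [← h]
        norm_num [tt, Finset.Icc_self]
      · have hm : 1 ≤ m := by omega
        rw [step m, Finset.sum_Icc_succ_top (show 1 ≤ m+1 by omega)]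
        push_cast
        rw [mul_sub, ih hm]
        have h0 : ((m:ℚ)+1)^2 ≠ 0 := by positivity
        field_simp
        ring
  have : (∑ k ∈ Finset.Icc 1 n, ((-1 : ℚ) ^ k / (k : ℚ) ^ 2) *
      ((n.choose k : ℚ) / ((n + k).choose k))) = ∑ k ∈ Finset.Icc 1 n, tt n k := rfl
  rw [this]
  exact main n hn
end

section
/- For every positive integer n, 2 * sum_{k=1}^n (1/k) * C(n,k) / C(n+k,k) = sum_{j=1}^n 1/j. -/
open Finset Nat

private lemma factQ_ne (a : ℕ) : ((a.factorial : ℚ)) ≠ 0 := by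
  exact_mod_cast a.factorial_ne_zero

/-- The per-term telescoping identity, stated with `n = k + m`. -/
private lemma key_s6 (k m : ℕ) (hk : 1 ≤ k) :
    (1/(k:ℚ)) * (((k+m+1).factorial : ℚ)^2/((m+1).factorial * (2*k+m+1).factorial))
    - (1/(k:ℚ)) * (((k+m).factorial : ℚ)^2/(m.factorial * (2*k+m).factorial))
    = (-(((k+m).factorial:ℚ)^2/(2 * ((m).factorial * (2*k+m+1).factorial))))
      - (-(((k+m).factorial:ℚ)^2/(2 * ((m+1).factorial * (2*k+m).factorial)))) := by
  have h1 : ((k+m+1).factorial:ℚ) = (k+m+1) * (k+m).factorial := by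
    exact_mod_cast Nat.factorial_succ (k+m)
  have h2 : ((m+1).factorial:ℚ) = (m+1) * m.factorial := by
    exact_mod_cast Nat.factorial_succ m
  have h3 : ((2*k+m+1).factorial:ℚ) = (2*k+m+1) * (2*k+m).factorial := by
    exact_mod_cast Nat.factorial_succ (2*k+m)
  have hk0 : (k:ℚ) ≠ 0 := Nat.cast_ne_zero.mpr (by omega)
  rw [h1, h2, h3]
  have e1 := factQ_ne m
  have e2 := factQ_ne (2*k+m)
  have e3 := factQ_ne (k+m)
  field_simp
  push_cast
  ring

private def G (n k : ℕ) : ℚ :=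
  -((n.factorial : ℚ)^2 / (2 * ((n+1-k).factorial * (n+k).factorial)))

private def Sq (n : ℕ) : ℚ :=
  ∑ k ∈ Icc 1 n, (1/(k:ℚ)) * ((n.factorial:ℚ)^2 / ((n-k).factorial * (n+k).factorial))

private lemma step_s6 (n : ℕ) : Sq (n+1) = Sq n + 1/(2*((n:ℚ)+1)) := by
  have hn1 : ((n:ℚ)+1) ≠ 0 := by positivity
  have hfn1 : (((n+1).factorial : ℚ)) = (n+1) * n.factorial := by
    exact_mod_cast Nat.factorial_succ n
  -- split off the top term
  have hsplit := Finset.sum_Icc_succ_top (a := 1) (b := n) (by omega)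
    (fun k => (1/(k:ℚ)) * (((n+1).factorial:ℚ)^2 / (((n+1)-k).factorial * ((n+1)+k).factorial)))
  have hdiff : ∑ k ∈ Icc 1 n,
      (1/(k:ℚ)) * (((n+1).factorial:ℚ)^2 / (((n+1)-k).factorial * ((n+1)+k).factorial))
      - Sq n = G n (n+1) - G n 1 := by
    rw [Sq, ← Finset.sum_sub_distrib]
    rw [show (G n (n+1) - G n 1) = (∑ k ∈ Icc 1 n, (G n (k+1) - G n k)) from by
      rw [← Finset.Ico_add_one_right_eq_Icc, Finset.sum_Ico_eq_sum_range]
      have := Finset.sum_range_sub (fun i => G n (i+1)) n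
      simpa [add_comm] using this.symm]
    refine Finset.sum_congr rfl ?_
    intro k hk
    rw [Finset.mem_Icc] at hk
    obtain ⟨m, hm⟩ : ∃ m, n = k + m := ⟨n - k, by omega⟩
    subst hm
    have e1 : (k + m + 1) - k = m + 1 := by omega
    have e2 : (k + m + 1) + k = 2*k + m + 1 := by omega
    have e3 : (k + m) - k = m := by omega
    have e4 : (k + m) + k = 2*k + m := by omega
    have e5 : (k + m) + 1 - (k+1) = m := by omega
    have e6 : (k + m) + (k+1) = 2*k + m + 1 := by omega
    rw [G, G, e1, e2, e3, e4, e5, e6]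
    exact key_s6 k m hk.1
  have htop : (1/((n+1:ℕ):ℚ)) * (((n+1).factorial:ℚ)^2 /
      (((n+1)-(n+1)).factorial * ((n+1)+(n+1)).factorial)) = -(G n (n+1)) := by
    have h4 : (((n+1)+(n+1)).factorial : ℚ) = (2*n+2) * ((n+(n+1)).factorial) := by
      have : (n+1)+(n+1) = (n + (n+1)) + 1 := by omega
      rw [this]
      have := Nat.factorial_succ (n + (n+1))
      push_cast [this]
      ring
    rw [G]
    simp only [Nat.sub_self, Nat.factorial_zero, Nat.add_sub_cancel, h4, hfn1]
    push_cast
    have e2 := factQ_ne (n+(n+1))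
    have e3 := factQ_ne n
    field_simp
  have hG1 : G n 1 = -(1/(2*((n:ℚ)+1))) := by
    rw [G]
    simp only [Nat.add_sub_cancel]
    rw [hfn1]
    have e3 := factQ_ne n
    have e4 := factQ_ne (n+1)
    field_simp
  have : Sq (n+1) = (∑ k ∈ Icc 1 n,
      (1/(k:ℚ)) * (((n+1).factorial:ℚ)^2 / (((n+1)-k).factorial * ((n+1)+k).factorial)))
      + (1/((n+1:ℕ):ℚ)) * (((n+1).factorial:ℚ)^2 /
        (((n+1)-(n+1)).factorial * ((n+1)+(n+1)).factorial)) := by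
    rw [Sq]; exact hsplit
  rw [this, htop]
  have := hdiff
  rw [hG1] at this
  linarith [this]

private lemma main (n : ℕ) : 2 * Sq n = ∑ j ∈ Icc 1 n, (1:ℚ)/j := by
  induction n with
  | zero => simp [Sq]
  | succ n ih =>
    rw [step_s6, Finset.sum_Icc_succ_top (by omega : 1 ≤ n + 1)]
    rw [← ih]
    have hn1 : ((n:ℚ)+1) ≠ 0 := by positivity
    push_cast
    field_simp

theorem stmt_6 (n : ℕ) (hn : 1 ≤ n) :
    2 * ∑ k ∈ Finset.Icc 1 n, (1 / (k : ℚ)) * ((n.choose k : ℚ) / ((n + k).choose k)) =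
    ∑ j ∈ Finset.Icc 1 n, (1 : ℚ) / j := by
  rw [← main n]
  congr 1
  rw [Sq]
  refine Finset.sum_congr rfl ?_
  intro k hk
  rw [Finset.mem_Icc] at hk
  congr 1
  rw [Nat.cast_choose ℚ hk.2, Nat.cast_choose ℚ (by omega : k ≤ n + k),
    Nat.add_sub_cancel]
  have e1 := factQ_ne k
  have e2 := factQ_ne n
  have e3 := factQ_ne (n-k)
  have e4 := factQ_ne (n+k)
  field_simp
end

section
/- For every positive integer n, 2 * sum_{k=1}^n (1/k^3) * C(n,k) / C(n+k,k) = sum_{1<=i<=j<=n} 1/(i * j^2). -/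
open Finset

noncomputable def F (n : ℕ) : ℚ := (n.factorial : ℚ)

lemma F_ne (n : ℕ) : F n ≠ 0 := by
  simp [F, Nat.factorial_ne_zero]

lemma F_succ (n : ℕ) : F (n + 1) = ((n : ℚ) + 1) * F n := by
  unfold F
  rw [Nat.factorial_succ]
  push_cast
  ring

noncomputable def A (n k : ℕ) : ℚ := F n ^ 2 / (F (n - k) * F (n + k))

lemma choose_eq (n k : ℕ) (h : k ≤ n) :
    (n.choose k : ℚ) / ((n + k).choose k) = A n k := by
  rw [Nat.cast_choose ℚ h, Nat.cast_choose ℚ (Nat.le_add_left k n)]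
  have h2 : n + k - k = n := by omega
  rw [h2]
  unfold A F
  have h1 := F_ne k
  have h3 := F_ne n
  have h4 := F_ne (n - k)
  have h5 := F_ne (n + k)
  simp only [F] at *
  field_simp

lemma tele (m i : ℕ) (hi : i < m) :
    ((i : ℚ) + 1) * A m (i + 1) =
      ((m : ℚ) - i) / 2 * A m i - ((m : ℚ) - ((i : ℚ) + 1)) / 2 * A m (i + 1) := by
  obtain ⟨j, rfl⟩ : ∃ j, m = i + 1 + j := ⟨m - (i + 1), by omega⟩
  have h1 : i + 1 + j - (i + 1) = j := by omega
  have h2 : i + 1 + j - i = j + 1 := by omega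
  have h3 : i + 1 + j + (i + 1) = (i + 1 + j + i) + 1 := by omega
  unfold A
  rw [h1, h2, h3, F_succ, F_succ]
  have e1 := F_ne j
  have e2 := F_ne (i + 1 + j)
  have e3 := F_ne (i + 1 + j + i)
  push_cast
  field_simp
  ring

lemma sum1 (m : ℕ) (hm : 1 ≤ m) :
    ∑ k ∈ Icc 1 m, (k : ℚ) * A m k = (m : ℚ) / 2 := by
  have hIcc : ∑ k ∈ Icc 1 m, (k : ℚ) * A m k
      = ∑ i ∈ range m, ((1 + i : ℕ) : ℚ) * A m (1 + i) := by
    rw [← Finset.Ico_add_one_right_eq_Icc, Finset.sum_Ico_eq_sum_range]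
    simp
  rw [hIcc]
  have key : ∀ i ∈ range m, ((1 + i : ℕ) : ℚ) * A m (1 + i)
      = (fun i => ((m : ℚ) - i) / 2 * A m i) i
        - (fun i => ((m : ℚ) - i) / 2 * A m i) (i + 1) := by
    intro i hi
    simp only [mem_range] at hi
    have := tele m i hi
    push_cast
    rw [add_comm 1 i]
    push_cast at this
    linarith
  rw [Finset.sum_congr rfl key, Finset.sum_range_sub']
  have hA0 : A m 0 = 1 := by
    unfold A
    simp [pow_two]
    exact F_ne m
  simp [hA0]

lemma diffA (m k : ℕ) (hk1 : 1 ≤ k) (hk : k ≤ m) :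
    ((m : ℚ) + 1) ^ 2 * (A (m + 1) k - A m k) = (k : ℚ) ^ 2 * A (m + 1) k := by
  obtain ⟨j, rfl⟩ : ∃ j, m = k + j := ⟨m - k, by omega⟩
  have h1 : k + j + 1 - k = j + 1 := by omega
  have h2 : k + j - k = j := by omega
  have h3 : k + j + 1 + k = (k + j + k) + 1 := by omega
  unfold A
  rw [h1, h2, h3, F_succ, F_succ, F_succ]
  have e1 := F_ne j
  have e2 := F_ne (k + j)
  have e3 := F_ne (k + j + k)
  push_cast
  field_simp
  ring

noncomputable def H (m : ℕ) : ℚ := ∑ i ∈ Icc 1 m, 1 / (i : ℚ)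

lemma sumU (m : ℕ) (hm : 1 ≤ m) :
    ∑ k ∈ Icc 1 m, (1 / (k : ℚ)) * A m k = H m / 2 := by
  induction m with
  | zero => omega
  | succ m ih =>
    rcases Nat.eq_zero_or_pos m with h0 | h1
    · subst h0
      have hA : A 1 1 = 1 / 2 := by
        unfold A F
        norm_num [Nat.factorial]
      simp [H, hA]
    · have hm1 : ((m : ℚ) + 1) ≠ 0 := by positivity
      have split : ∀ k ∈ Icc 1 m, (1 / (k : ℚ)) * A (m + 1) k
          = (1 / (k : ℚ)) * A m k
            + 1 / ((m : ℚ) + 1) ^ 2 * ((k : ℚ) * A (m + 1) k) := by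
        intro k hk
        simp only [mem_Icc] at hk
        have hd := diffA m k hk.1 hk.2
        have hk0 : (k : ℚ) ≠ 0 := by
          have : 0 < k := hk.1
          positivity
        field_simp
        linear_combination hd
      rw [Finset.sum_Icc_succ_top (by omega), Finset.sum_congr rfl split,
        Finset.sum_add_distrib, ih h1, ← Finset.mul_sum]
      have hsum : ∑ k ∈ Icc 1 m, (k : ℚ) * A (m + 1) k
          + ((m : ℚ) + 1) * A (m + 1) (m + 1)
          = ((m : ℚ) + 1) / 2 := by
        have := sum1 (m + 1) (by omega)
        rw [Finset.sum_Icc_succ_top (by omega)] at this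
        push_cast at this
        linarith
      have hH : H (m + 1) = H m + 1 / ((m : ℚ) + 1) := by
        unfold H
        rw [Finset.sum_Icc_succ_top (by omega)]
        push_cast
        ring
      have htop : (1 / (((m : ℕ) + 1 : ℕ) : ℚ)) * A (m + 1) (m + 1)
          = 1 / ((m : ℚ) + 1) ^ 2 * (((m : ℚ) + 1) * A (m + 1) (m + 1)) := by
        push_cast
        field_simp
      rw [htop, hH]
      have hc : 1 / ((m : ℚ) + 1) ^ 2 * (∑ k ∈ Icc 1 m, (k : ℚ) * A (m + 1) k)
          + 1 / ((m : ℚ) + 1) ^ 2 * (((m : ℚ) + 1) * A (m + 1) (m + 1))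
          = 1 / ((m : ℚ) + 1) ^ 2 * (((m : ℚ) + 1) / 2) := by
        rw [← mul_add, hsum]
      have hval : 1 / ((m : ℚ) + 1) ^ 2 * (((m : ℚ) + 1) / 2)
          = (1 / ((m : ℚ) + 1)) / 2 := by
        field_simp
      linarith

lemma sumV (n : ℕ) (hn : 1 ≤ n) :
    2 * ∑ k ∈ Icc 1 n, (1 / (k : ℚ) ^ 3) * A n k
      = ∑ j ∈ Icc 1 n, H j / (j : ℚ) ^ 2 := by
  induction n with
  | zero => omega
  | succ n ih =>
    rcases Nat.eq_zero_or_pos n with h0 | h1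
    · subst h0
      have hA : A 1 1 = 1 / 2 := by
        unfold A F
        norm_num [Nat.factorial]
      simp [H, hA]
    · have hn1 : ((n : ℚ) + 1) ≠ 0 := by positivity
      have split : ∀ k ∈ Icc 1 n, (1 / (k : ℚ) ^ 3) * A (n + 1) k
          = (1 / (k : ℚ) ^ 3) * A n k
            + 1 / ((n : ℚ) + 1) ^ 2 * ((1 / (k : ℚ)) * A (n + 1) k) := by
        intro k hk
        simp only [mem_Icc] at hk
        have hd := diffA n k hk.1 hk.2
        have hk0 : (k : ℚ) ≠ 0 := by
          have : 0 < k := hk.1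
          positivity
        field_simp
        linear_combination hd
      rw [Finset.sum_Icc_succ_top (by omega), Finset.sum_congr rfl split,
        Finset.sum_add_distrib, ← Finset.mul_sum]
      have hsum : ∑ k ∈ Icc 1 n, (1 / (k : ℚ)) * A (n + 1) k
          + (1 / ((n : ℚ) + 1)) * A (n + 1) (n + 1)
          = H (n + 1) / 2 := by
        have := sumU (n + 1) (by omega)
        rw [Finset.sum_Icc_succ_top (by omega)] at this
        push_cast at this
        linarith
      have htop : (1 / (((n : ℕ) + 1 : ℕ) : ℚ) ^ 3) * A (n + 1) (n + 1)
          = 1 / ((n : ℚ) + 1) ^ 2 * ((1 / ((n : ℚ) + 1)) * A (n + 1) (n + 1)) := by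
        push_cast
        field_simp
      rw [htop]
      rw [Finset.sum_Icc_succ_top (a := 1) (b := n) (by omega)
        (f := fun j => H j / (j : ℚ) ^ 2)]
      have hc : 2 * (∑ k ∈ Icc 1 n, (1 / (k : ℚ) ^ 3) * A n k
            + 1 / ((n : ℚ) + 1) ^ 2 * (∑ k ∈ Icc 1 n, (1 / (k : ℚ)) * A (n + 1) k)
            + 1 / ((n : ℚ) + 1) ^ 2 * ((1 / ((n : ℚ) + 1)) * A (n + 1) (n + 1)))
          = 2 * ∑ k ∈ Icc 1 n, (1 / (k : ℚ) ^ 3) * A n k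
            + 2 * (1 / ((n : ℚ) + 1) ^ 2)
              * (∑ k ∈ Icc 1 n, (1 / (k : ℚ)) * A (n + 1) k
                 + (1 / ((n : ℚ) + 1)) * A (n + 1) (n + 1)) := by
        ring
      rw [hc, hsum, ih h1]
      have hval : 2 * (1 / ((n : ℚ) + 1) ^ 2) * (H (n + 1) / 2)
          = H (n + 1) / ((n : ℚ) + 1) ^ 2 := by
        field_simp
      push_cast
      linarith [hval]

theorem stmt_7 (n : ℕ) (hn : 1 ≤ n) :
    2 * ∑ k ∈ Finset.Icc 1 n, (1 / (k : ℚ) ^ 3) * ((n.choose k : ℚ) / ((n + k).choose k)) =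
    ∑ j ∈ Finset.Icc 1 n, ∑ i ∈ Finset.Icc 1 j, (1 : ℚ) / (i * (j : ℚ) ^ 2) := by
  have hL : ∀ k ∈ Icc 1 n, (1 / (k : ℚ) ^ 3) * ((n.choose k : ℚ) / ((n + k).choose k))
      = (1 / (k : ℚ) ^ 3) * A n k := by
    intro k hk
    simp only [mem_Icc] at hk
    rw [choose_eq n k hk.2]
  have hR : ∀ j ∈ Icc 1 n, ∑ i ∈ Icc 1 j, (1 : ℚ) / (i * (j : ℚ) ^ 2)
      = H j / (j : ℚ) ^ 2 := by
    intro j hj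
    simp only [mem_Icc] at hj
    have hj0 : ((j : ℚ)) ≠ 0 := by
      have : 0 < j := hj.1
      positivity
    unfold H
    rw [Finset.sum_div]
    refine Finset.sum_congr rfl fun i hi => ?_
    simp only [mem_Icc] at hi
    have hi0 : ((i : ℚ)) ≠ 0 := by
      have : 0 < i := hi.1
      positivity
    field_simp
  rw [Finset.sum_congr rfl hL, Finset.sum_congr rfl hR, sumV n hn]
end

section
/- For every positive integer n, 2 * sum_{k=1}^n ((-1)^k / k^4) * C(n,k) / C(n+k,k) = - sum_{1<=i<=j<=n} 1/(i^2 * j^2). -/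
open Finset

noncomputable def aq (n k : ℕ) : ℚ := (n.choose k : ℚ) / ((n + k).choose k : ℚ)

lemma chq_ne (n k : ℕ) : ((n + k).choose k : ℚ) ≠ 0 := by
  have : 0 < (n + k).choose k := Nat.choose_pos (Nat.le_add_left k n)
  exact_mod_cast this.ne'

lemma r1 (n k : ℕ) : aq n (k + 1) * ((n : ℚ) + k + 1) = aq n k * ((n : ℚ) - k) := by
  by_cases h : k ≤ n
  · have q1 : (n.choose (k + 1) : ℚ) * ((k : ℚ) + 1) = (n.choose k : ℚ) * ((n : ℚ) - k) := by
      have h0 := Nat.choose_succ_right_eq n k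
      have h1 := congrArg (fun m : ℕ => (m : ℚ)) h0
      push_cast [Nat.cast_sub h] at h1
      linarith [h1]
    have q2 : ((n : ℚ) + k + 1) * ((n + k).choose k : ℚ)
        = (((n + k + 1).choose (k + 1)) : ℚ) * ((k : ℚ) + 1) := by
      have h0 := Nat.add_one_mul_choose_eq (n + k) k
      have h1 := congrArg (fun m : ℕ => (m : ℚ)) h0
      push_cast at h1
      linarith [h1]
    have hadd : n + (k + 1) = n + k + 1 := by ring
    have hne1 : ((n + k + 1).choose (k + 1) : ℚ) ≠ 0 := by rw [← hadd]; exact chq_ne n (k + 1)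
    have hne2 : ((n + k).choose k : ℚ) ≠ 0 := chq_ne n k
    unfold aq
    rw [hadd, div_mul_eq_mul_div, div_mul_eq_mul_div, div_eq_div_iff hne1 hne2]
    linear_combination ((n.choose (k + 1) : ℚ)) * q2 + (((n + k + 1).choose (k + 1)) : ℚ) * q1
  · push_neg at h
    have h1 : n.choose (k + 1) = 0 := Nat.choose_eq_zero_of_lt (by omega)
    have h2 : n.choose k = 0 := Nat.choose_eq_zero_of_lt h
    simp [aq, h1, h2]

lemma r2 (n k : ℕ) :
    aq (n + 1) k * (((n : ℚ) + 1) - k) * (((n : ℚ) + 1) + k) = aq n k * ((n : ℚ) + 1) ^ 2 := by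
  by_cases h : k ≤ n + 1
  · have c1 : ((n + 1).choose k : ℚ) * (((n : ℚ) + 1) - k) = (n.choose k : ℚ) * ((n : ℚ) + 1) := by
      have h0 := Nat.choose_mul_succ_eq n k
      have h1 := congrArg (fun m : ℕ => (m : ℚ)) h0
      push_cast [Nat.cast_sub h] at h1
      linarith [h1]
    have c2 : ((n + k).choose k : ℚ) * ((n : ℚ) + k + 1)
        = ((n + 1 + k).choose k : ℚ) * ((n : ℚ) + 1) := by
      have h0 := Nat.choose_mul_succ_eq (n + k) k
      have h1 := congrArg (fun m : ℕ => (m : ℚ)) h0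
      have hsub : n + k + 1 - k = n + 1 := by omega
      have he : n + k + 1 = n + 1 + k := by ring
      rw [hsub, he] at h1
      push_cast at h1
      linarith [h1]
    have hne1 : ((n + 1 + k).choose k : ℚ) ≠ 0 := chq_ne (n + 1) k
    have hne2 : ((n + k).choose k : ℚ) ≠ 0 := chq_ne n k
    unfold aq
    rw [div_mul_eq_mul_div, div_mul_eq_mul_div, div_mul_eq_mul_div, div_eq_div_iff hne1 hne2]
    linear_combination (((n : ℚ) + 1) + k) * ((n + k).choose k : ℚ) * c1
      + (n.choose k : ℚ) * ((n : ℚ) + 1) * c2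
  · push_neg at h
    have h1 : (n + 1).choose k = 0 := Nat.choose_eq_zero_of_lt h
    have h2 : n.choose k = 0 := Nat.choose_eq_zero_of_lt (by omega)
    simp [aq, h1, h2]

lemma tele_s8 (n : ℕ) (hn : 1 ≤ n) :
    ∑ k ∈ Icc 1 n, (-1 : ℚ) ^ k * aq n k = -1 / 2 := by
  have hnq : (n : ℚ) ≠ 0 := by exact_mod_cast Nat.one_le_iff_ne_zero.mp hn
  set g : ℕ → ℚ := fun k => -(((n : ℚ) + k) / (2 * n)) * ((-1 : ℚ) ^ k * aq n k) with hg
  have key : ∀ k : ℕ, (-1 : ℚ) ^ k * aq n k = g (k + 1) - g k := by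
    intro k
    have h1 := r1 n k
    simp only [hg]
    push_cast
    rw [pow_succ]
    field_simp
    linear_combination (-1 : ℚ) * h1
  have hIcc : Icc 1 n = Ico 1 (n + 1) := by rw [Finset.Ico_add_one_right_eq_Icc]
  rw [hIcc, Finset.sum_Ico_eq_sum_range]
  simp only [Nat.add_sub_cancel]
  have : ∀ i ∈ Finset.range n, (-1 : ℚ) ^ (1 + i) * aq n (1 + i)
      = (fun j => g (j + 1)) (i + 1) - (fun j => g (j + 1)) i := by
    intro i _
    have := key (1 + i)
    simpa [add_comm, add_assoc, add_left_comm] using this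
  rw [Finset.sum_congr rfl this, Finset.sum_range_sub (fun j => g (j + 1))]
  have hz : aq n (n + 1) = 0 := by
    simp [aq, Nat.choose_eq_zero_of_lt (Nat.lt_succ_self n)]
  have h1 : aq n 1 = (n : ℚ) / ((n : ℚ) + 1) := by
    simp only [aq, Nat.choose_one_right]
    norm_num
  simp only [hg, hz, h1]
  push_cast
  field_simp
  ring

lemma S2sum (n : ℕ) :
    ∑ k ∈ Icc 1 n, ((-1 : ℚ) ^ k / (k : ℚ) ^ 2) * aq n k
      = -(1 / 2) * ∑ i ∈ Icc 1 n, (1 : ℚ) / (i : ℚ) ^ 2 := by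
  induction n with
  | zero => simp
  | succ n ih =>
    rw [Finset.sum_Icc_succ_top (by omega), Finset.sum_Icc_succ_top (by omega)]
    have hstep : ∀ k ∈ Icc 1 n, ((-1 : ℚ) ^ k / (k : ℚ) ^ 2) * aq (n + 1) k
        = ((-1 : ℚ) ^ k / (k : ℚ) ^ 2) * aq n k
          + (1 / ((n : ℚ) + 1) ^ 2) * ((-1 : ℚ) ^ k * aq (n + 1) k) := by
      intro k hk
      have hk1 : 1 ≤ k := (Finset.mem_Icc.mp hk).1
      have hkq : (k : ℚ) ≠ 0 := by exact_mod_cast Nat.one_le_iff_ne_zero.mp hk1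
      have hnq : ((n : ℚ) + 1) ≠ 0 := by positivity
      have h2 := r2 n k
      field_simp
      linear_combination h2
    rw [Finset.sum_congr rfl hstep, Finset.sum_add_distrib, ← Finset.mul_sum]
    have htele := tele_s8 (n + 1) (by omega)
    rw [Finset.sum_Icc_succ_top (by omega)] at htele
    push_cast at htele ⊢
    linear_combination ih + (1 / ((n : ℚ) + 1) ^ 2) * htele

lemma mainsum (n : ℕ) :
    2 * ∑ k ∈ Finset.Icc 1 n, ((-1 : ℚ) ^ k / (k : ℚ) ^ 4) * aq n k
      = -∑ j ∈ Finset.Icc 1 n, ∑ i ∈ Finset.Icc 1 j, (1 : ℚ) / ((i : ℚ) ^ 2 * (j : ℚ) ^ 2) := by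
  induction n with
  | zero => simp
  | succ n ih =>
    rw [Finset.sum_Icc_succ_top (by omega), Finset.sum_Icc_succ_top (by omega)]
    have hstep : ∀ k ∈ Icc 1 n, ((-1 : ℚ) ^ k / (k : ℚ) ^ 4) * aq (n + 1) k
        = ((-1 : ℚ) ^ k / (k : ℚ) ^ 4) * aq n k
          + (1 / ((n : ℚ) + 1) ^ 2) * (((-1 : ℚ) ^ k / (k : ℚ) ^ 2) * aq (n + 1) k) := by
      intro k hk
      have hk1 : 1 ≤ k := (Finset.mem_Icc.mp hk).1
      have hkq : (k : ℚ) ≠ 0 := by exact_mod_cast Nat.one_le_iff_ne_zero.mp hk1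
      have hnq : ((n : ℚ) + 1) ≠ 0 := by positivity
      have h2 := r2 n k
      field_simp
      linear_combination h2
    rw [Finset.sum_congr rfl hstep, Finset.sum_add_distrib, ← Finset.mul_sum]
    have hs2 := S2sum (n + 1)
    rw [Finset.sum_Icc_succ_top (by omega)] at hs2
    have hpull : ∑ i ∈ Icc 1 (n + 1), (1 : ℚ) / ((i : ℚ) ^ 2 * ((n + 1 : ℕ) : ℚ) ^ 2)
        = (1 / (((n + 1 : ℕ) : ℚ)) ^ 2) * ∑ i ∈ Icc 1 (n + 1), (1 : ℚ) / (i : ℚ) ^ 2 := by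
      rw [Finset.mul_sum]
      refine Finset.sum_congr rfl fun i _ => by ring
    rw [hpull]
    push_cast at hs2 ⊢
    have hb : ((((n : ℚ) + 1) ^ 2)⁻¹) ^ 2 = (((n : ℚ) + 1) ^ 4)⁻¹ := by
      rw [inv_pow, ← pow_mul]
    linear_combination ih + (2 / ((n : ℚ) + 1) ^ 2) * hs2
      + (2 * (-1 : ℚ) ^ n * aq (n + 1) (n + 1)) * hb

theorem stmt_8 (n : ℕ) (hn : 1 ≤ n) :
    2 * ∑ k ∈ Finset.Icc 1 n, ((-1 : ℚ) ^ k / (k : ℚ) ^ 4) *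
      ((n.choose k : ℚ) / ((n + k).choose k)) =
    -∑ j ∈ Finset.Icc 1 n, ∑ i ∈ Finset.Icc 1 j, (1 : ℚ) / ((i : ℚ) ^ 2 * (j : ℚ) ^ 2) := by
  have := mainsum n
  simpa only [aq] using this
end

section
/- For every positive integer n, sum_{k=1}^n ((-1)^k / k) * C(n,k) * C(n+k,k) * H_k(2) = -(2 * H_n(3) + 4 * H_n(1,2)), where H_k(2) = sum_{j=1}^k 1/j^2, H_n(3) = sum_{j=1}^n 1/j^3, and H_n(1,2) = sum_{1<=i<j<=n} 1/(i * j^2). -/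
open Finset

lemma tailW (n : ℕ) : ∀ d i : ℕ, i + d = n →
    ∑ k ∈ Finset.Icc (i+1) (n+1), (-1:ℚ)^k * ((n+1).choose k) * ((n+k).choose k)
      = (-1:ℚ)^(i+1) * (n.choose i) * ((n+i+1).choose i) := by
  intro d
  induction d with
  | zero =>
    intro i h
    have hi : i = n := by omega
    simp only [hi]
    rw [Finset.Icc_self, Finset.sum_singleton]
    have hsym : (n + (n+1)).choose (n+1) = (n + (n+1)).choose n := by
      have := Nat.choose_symm (n := n + (n+1)) (k := n+1) (by omega)
      rw [show n + (n+1) - (n+1) = n from by omega] at this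
      exact this.symm
    rw [hsym]
    rw [show n + n + 1 = n + (n+1) from by omega]
    simp
  | succ d ih =>
    intro i h
    have hin : i + 1 ≤ n := by omega
    have hsplit : Finset.Icc (i+1) (n+1) = insert (i+1) (Finset.Icc (i+2) (n+1)) := by
      ext x; simp; omega
    rw [hsplit, Finset.sum_insert (by simp)]
    rw [ih (i+1) (by omega)]
    -- pointwise identity
    have c1 : ((n:ℚ)+1) * (n.choose i) = ((n+1).choose (i+1)) * ((i:ℚ)+1) := by
      have := Nat.add_one_mul_choose_eq n i
      have := congrArg (Nat.cast : ℕ → ℚ) this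
      push_cast at this
      linarith [this]
    have c2 : (((n+i+1).choose (i+1)):ℚ) * ((i:ℚ)+1) = ((n+i+1).choose i) * ((n:ℚ)+1) := by
      have := Nat.choose_succ_right_eq (n+i+1) i
      rw [show n+i+1-i = n+1 from by omega] at this
      have := congrArg (Nat.cast : ℕ → ℚ) this
      push_cast at this
      linarith [this]
    have c3 : ((n:ℚ)+1) * (n.choose (i+1)) = ((n+1).choose (i+1)) * ((n:ℚ) - i) := by
      have := Nat.choose_mul_succ_eq n (i+1)
      rw [show n+1-(i+1) = n - i from by omega] at this
      have := congrArg (Nat.cast : ℕ → ℚ) this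
      push_cast [Nat.cast_sub (by omega : i ≤ n)] at this
      linarith [this]
    have c4 : ((n:ℚ)+1) * ((n+i+2).choose (i+1)) = ((n:ℚ)+i+2) * ((n+i+1).choose (i+1)) := by
      have := Nat.choose_mul_succ_eq (n+i+1) (i+1)
      rw [show n+i+1+1-(i+1) = n+1 from by omega, show n+i+1+1 = n+i+2 from by omega] at this
      have := congrArg (Nat.cast : ℕ → ℚ) this
      push_cast at this
      linarith [this]
    have hm : ((n:ℚ)+1) ≠ 0 := by positivity
    -- goal: (-1)^(i+1)*C(n+1,i+1)*C(n+(i+1),i+1) + (-1)^(i+2)*C(n,i+1)*C(n+i+2,i+1)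
    --        = (-1)^(i+1)*C(n,i)*C(n+i+1,i)
    have key : (((n+1).choose (i+1)):ℚ) * ((n+i+1).choose (i+1))
        - ((n.choose (i+1)):ℚ) * ((n+i+2).choose (i+1))
        = ((n.choose i):ℚ) * ((n+i+1).choose i) := by
      have key2 : ((n:ℚ)+1)^2 * ((((n+1).choose (i+1)):ℚ) * ((n+i+1).choose (i+1))
          - ((n.choose (i+1)):ℚ) * ((n+i+2).choose (i+1)))
          = ((n:ℚ)+1)^2 * (((n.choose i):ℚ) * ((n+i+1).choose i)) := by
        linear_combination (-(((n:ℚ)+1) * ((n+i+2).choose (i+1)))) * c3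
          - (((n:ℚ) - i) * ((n+1).choose (i+1))) * c4
          - (((n:ℚ)+1) * ((n+i+1).choose i)) * c1
          + (((i:ℚ)+1) * ((n+1).choose (i+1))) * c2
      exact mul_left_cancel₀ (pow_ne_zero 2 hm) key2
    rw [show n + (i+1) = n + i + 1 from by omega]
    linear_combination ((-1:ℚ)^(i+1)) * key

theorem stmt_10 (n : ℕ) (hn : 1 ≤ n) :
    ∑ k ∈ Finset.Icc 1 n, ((-1 : ℚ) ^ k / k) * (n.choose k) * ((n + k).choose k) *
      (∑ j ∈ Finset.Icc 1 k, (1 : ℚ) / (j : ℚ) ^ 2) =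
    -(2 * ∑ j ∈ Finset.Icc 1 n, (1 : ℚ) / (j : ℚ) ^ 3) := by
  induction n, hn using Nat.le_induction with
  | base => norm_num
  | succ n hn ih =>
    have hm : ((n:ℚ)+1) ≠ 0 := by positivity
    -- pointwise splitting
    have split : ∀ k ∈ Finset.Icc 1 (n+1),
        ((-1 : ℚ) ^ k / k) * ((n+1).choose k) * ((n+1+k).choose k) *
          (∑ j ∈ Finset.Icc 1 k, (1 : ℚ) / (j : ℚ) ^ 2)
        = ((-1 : ℚ) ^ k / k) * (n.choose k) * ((n+k).choose k) *
          (∑ j ∈ Finset.Icc 1 k, (1 : ℚ) / (j : ℚ) ^ 2)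
          + (2/((n:ℚ)+1)) * ((-1:ℚ)^k * ((n+1).choose k) * ((n+k).choose k)) *
          (∑ j ∈ Finset.Icc 1 k, (1 : ℚ) / (j : ℚ) ^ 2) := by
      intro k hk
      simp only [Finset.mem_Icc] at hk
      have hk0 : (k:ℚ) ≠ 0 := Nat.cast_ne_zero.mpr (by omega)
      have c1 : (((n+k).choose k):ℚ) * ((n:ℚ)+k+1) = (((n+k+1).choose k):ℚ) * ((n:ℚ)+1) := by
        have := Nat.choose_mul_succ_eq (n+k) k
        rw [show n+k+1-k = n+1 from by omega] at this
        have := congrArg (Nat.cast : ℕ → ℚ) this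
        push_cast at this
        linarith [this]
      have c2 : ((n.choose k):ℚ) * ((n:ℚ)+1) = (((n+1).choose k):ℚ) * ((n:ℚ)+1-k) := by
        have := Nat.choose_mul_succ_eq n k
        have := congrArg (Nat.cast : ℕ → ℚ) this
        push_cast [Nat.cast_sub (by omega : k ≤ n+1)] at this
        linarith [this]
      have key : ((-1 : ℚ) ^ k / k) * ((n+1).choose k) * ((n+1+k).choose k)
          = ((-1 : ℚ) ^ k / k) * (n.choose k) * ((n+k).choose k)
            + (2/((n:ℚ)+1)) * ((-1:ℚ)^k * ((n+1).choose k) * ((n+k).choose k)) := by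
        rw [show n+1+k = n+k+1 from by omega]
        field_simp
        linear_combination (-(((n+1).choose k):ℚ)) * c1
          - (((n+k).choose k):ℚ) * c2
      linear_combination (∑ j ∈ Finset.Icc 1 k, (1 : ℚ) / (j : ℚ) ^ 2) * key
    rw [Finset.sum_congr rfl split, Finset.sum_add_distrib]
    -- first sum equals the old LHS
    have first : ∑ k ∈ Finset.Icc 1 (n+1), ((-1 : ℚ) ^ k / k) * (n.choose k) * ((n+k).choose k) *
          (∑ j ∈ Finset.Icc 1 k, (1 : ℚ) / (j : ℚ) ^ 2)
        = -(2 * ∑ j ∈ Finset.Icc 1 n, (1 : ℚ) / (j : ℚ) ^ 3) := by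
      rw [← ih, Finset.sum_Icc_succ_top (by omega : 1 ≤ n+1)]
      simp [Nat.choose_eq_zero_of_lt (by omega : n < n+1)]
    rw [first]
    -- second sum: swap + tail sums
    have second : ∑ k ∈ Finset.Icc 1 (n+1),
        (2/((n:ℚ)+1)) * ((-1:ℚ)^k * ((n+1).choose k) * ((n+k).choose k)) *
          (∑ j ∈ Finset.Icc 1 k, (1 : ℚ) / (j : ℚ) ^ 2)
        = -(2/((n:ℚ)+1)^3) := by
      have swap : ∑ k ∈ Finset.Icc 1 (n+1),
          (2/((n:ℚ)+1)) * ((-1:ℚ)^k * ((n+1).choose k) * ((n+k).choose k)) *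
            (∑ j ∈ Finset.Icc 1 k, (1 : ℚ) / (j : ℚ) ^ 2)
          = (2/((n:ℚ)+1)) * ∑ j ∈ Finset.Icc 1 (n+1),
              (∑ k ∈ Finset.Icc j (n+1), (-1:ℚ)^k * ((n+1).choose k) * ((n+k).choose k))
                * ((1:ℚ) / (j:ℚ)^2) := by
        rw [Finset.mul_sum]
        simp_rw [Finset.sum_mul, Finset.mul_sum]
        rw [Finset.sum_comm' (t' := Finset.Icc 1 (n+1)) (s' := fun j => Finset.Icc j (n+1))]
        · apply Finset.sum_congr rfl; intro j _
          apply Finset.sum_congr rfl; intro k _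
          ring
        · intro k j
          simp only [Finset.mem_Icc]
          omega
      rw [swap]
      -- evaluate inner tail sums
      have inner : ∀ j ∈ Finset.Icc 1 (n+1),
          (∑ k ∈ Finset.Icc j (n+1), (-1:ℚ)^k * ((n+1).choose k) * ((n+k).choose k))
            * ((1:ℚ) / (j:ℚ)^2)
          = ((-1:ℚ)^j * ((n+1).choose j) * ((n+j).choose j)) / ((n:ℚ)+1)^2 := by
        intro j hj
        simp only [Finset.mem_Icc] at hj
        obtain ⟨i, rfl⟩ : ∃ i, j = i + 1 := ⟨j - 1, by omega⟩
        rw [tailW n (n - i) i (by omega)]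
        have e1 : ((n:ℚ)+1) * (n.choose i) = (((n+1).choose (i+1)):ℚ) * ((i:ℚ)+1) := by
          have := Nat.add_one_mul_choose_eq n i
          have := congrArg (Nat.cast : ℕ → ℚ) this
          push_cast at this
          linarith [this]
        have e2 : (((n+i+1).choose (i+1)):ℚ) * ((i:ℚ)+1) = (((n+i+1).choose i):ℚ) * ((n:ℚ)+1) := by
          have := Nat.choose_succ_right_eq (n+i+1) i
          rw [show n+i+1-i = n+1 from by omega] at this
          have := congrArg (Nat.cast : ℕ → ℚ) this
          push_cast at this
          linarith [this]
        have hi0 : ((i:ℚ)+1) ≠ 0 := by positivity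
        rw [show n + (i+1) = n + i + 1 from by omega]
        push_cast
        field_simp
        linear_combination ((((n+i+1).choose i):ℚ) * ((n:ℚ)+1)) * e1
          - ((((n+1).choose (i+1)):ℚ) * ((i:ℚ)+1)) * e2
      rw [Finset.sum_congr rfl inner]
      have final : ∑ j ∈ Finset.Icc 1 (n+1),
          ((-1:ℚ)^j * ((n+1).choose j) * ((n+j).choose j)) / ((n:ℚ)+1)^2
          = -1 / ((n:ℚ)+1)^2 := by
        rw [← Finset.sum_div]
        rw [show (1:ℕ) = 0 + 1 from rfl, tailW n n 0 (by omega)]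
        norm_num
      rw [final]
      field_simp
    rw [second]
    rw [Finset.sum_Icc_succ_top (by omega : 1 ≤ n+1)]
    push_cast
    field_simp
    ring
end

section
/- For all positive integers n, a, b: 2 * sum_{k=1}^n (1/k^{2b-1}) * C(n,k) / C(n+k,k) * ((-1)^k * H_{k-1}(2a) - H_{k-1}(-2a)) = R_n(a,b), where H_{k-1}(2a) = sum_{j=1}^{k-1} 1/j^{2a}, H_{k-1}(-2a) = sum_{j=1}^{k-1} (-1)^j/j^{2a}, and R_n(a,b) = sum over indices 1<=j_1<=...<=j_a<k_1<=...<=k_b<=n of 1/(j_1^2 ... j_a^2 * (2k_1-1) * k_2^2 ... k_b^2). -/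
/-- `S m n c = S_{m,n}({2}^c)`, the multiple harmonic sum
`∑_{m ≤ k₁ ≤ ⋯ ≤ k_c ≤ n} 1/(k₁² ⋯ k_c²)` with non-strict inequalities. -/
def S (m n : ℕ) : ℕ → ℚ
  | 0 => 1
  | c + 1 => ∑ k ∈ Finset.Icc m n, (1 / (k : ℚ) ^ 2) * S k n c

/-- `R n a b = ∑_{1 ≤ j₁ ≤ ⋯ ≤ j_a < k₁ ≤ ⋯ ≤ k_b ≤ n}
  1/(j₁² ⋯ j_a² (2k₁-1) k₂² ⋯ k_b²)`, written as
  `∑_{k=1}^n S_{1,k-1}({2}^a) S_{k,n}({2}^{b-1}) / (2k-1)`. -/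
def R (n a b : ℕ) : ℚ :=
  ∑ k ∈ Finset.Icc 1 n, S 1 (k - 1) a * S k n (b - 1) / (2 * (k : ℚ) - 1)

open Finset

/-- ratio of binomial coefficients -/
def c (n k : ℕ) : ℚ := (n.choose k : ℚ) / ((n + k).choose k : ℚ)

lemma cden (n k : ℕ) : (((n + k).choose k : ℕ) : ℚ) ≠ 0 := by
  exact_mod_cast (Nat.choose_pos (Nat.le_add_left k n)).ne'

lemma c_big {n k : ℕ} (h : n < k) : c n k = 0 := by
  simp [c, Nat.choose_eq_zero_of_lt h]

lemma ratio1 (n k : ℕ) (h : k ≤ n) :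
    ((n : ℚ) + k + 1) * c n (k + 1) = ((n : ℚ) - k) * c n k := by
  have h1 : (n.choose (k+1) : ℚ) * (k+1) = (n.choose k : ℚ) * ((n:ℚ) - k) := by
    have h0 := Nat.choose_succ_right_eq n k
    have hc : ((n - k : ℕ) : ℚ) = (n:ℚ) - k := by push_cast [h]; ring
    calc (n.choose (k+1) : ℚ) * (k+1) = ((n.choose (k+1) * (k+1) : ℕ) : ℚ) := by push_cast; ring
    _ = ((n.choose k * (n - k) : ℕ) : ℚ) := by rw [h0]
    _ = (n.choose k : ℚ) * ((n:ℚ) - k) := by rw [Nat.cast_mul, hc]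
  have h2 : (((n+k+1).choose (k+1) : ℕ) : ℚ) * (k+1) = (((n+k).choose k : ℕ) : ℚ) * ((n:ℚ)+k+1) := by
    have h0 : (n+k+1) * ((n+k).choose k) = ((n+k+1).choose (k+1)) * (k+1) := by
      simpa [Nat.succ_eq_add_one] using Nat.add_one_mul_choose_eq (n+k) k
    calc (((n+k+1).choose (k+1) : ℕ) : ℚ) * (k+1)
        = ((((n+k+1).choose (k+1)) * (k+1) : ℕ) : ℚ) := by push_cast; ring
    _ = (((n+k+1) * ((n+k).choose k) : ℕ) : ℚ) := by rw [← h0]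
    _ = (((n+k).choose k : ℕ) : ℚ) * ((n:ℚ)+k+1) := by push_cast; ring
  have e1 : c n (k+1) = (n.choose (k+1) : ℚ) / ((n+k+1).choose (k+1) : ℚ) := by
    have e : n + (k+1) = n + k + 1 := by ring
    rw [c, e]
  rw [e1, c]
  have d1 := cden n k
  have d2 : (((n+k+1).choose (k+1) : ℕ) : ℚ) ≠ 0 := by
    have e : n + k + 1 = n + (k+1) := by ring
    rw [e]; exact cden n (k+1)
  rw [mul_div_assoc', mul_div_assoc', div_eq_div_iff d2 d1]
  have hk1 : ((k:ℚ)+1) ≠ 0 := by positivity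
  apply mul_left_cancel₀ hk1
  linear_combination ((n:ℚ)+k+1) * (((n+k).choose k : ℚ)) * h1
    - ((n:ℚ)-k) * ((n.choose k : ℚ)) * h2

lemma ratio2 (n k : ℕ) (h : k ≤ n + 1) :
    (((n:ℚ) + 1)^2 - (k:ℚ)^2) * c (n+1) k = ((n:ℚ)+1)^2 * c n k := by
  have key : ∀ m j : ℕ, j ≤ m + 1 → ((m+1).choose j : ℚ) * ((m:ℚ)+1-j) = ((m:ℚ)+1) * (m.choose j : ℚ) := by
    intro m j hj
    have h1 := Nat.choose_succ_right_eq (m+1) j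
    have h2' : (m+1) * (m.choose j) = ((m+1).choose (j+1)) * (j+1) := by
      simpa [Nat.succ_eq_add_one] using Nat.add_one_mul_choose_eq m j
    have hc : ((m + 1 - j : ℕ) : ℚ) = (m:ℚ) + 1 - j := by push_cast [hj]; ring
    have h1' : ((m+1).choose (j+1) : ℚ) * (j+1) = ((m+1).choose j : ℚ) * ((m:ℚ)+1-j) := by
      calc ((m+1).choose (j+1) : ℚ) * (j+1) = (((m+1).choose (j+1) * (j+1) : ℕ) : ℚ) := by push_cast; ring
      _ = (((m+1).choose j * (m + 1 - j) : ℕ) : ℚ) := by rw [h1]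
      _ = ((m+1).choose j : ℚ) * ((m:ℚ)+1-j) := by rw [Nat.cast_mul, hc]
    have h2'' : ((m:ℚ)+1) * (m.choose j : ℚ) = ((m+1).choose (j+1) : ℚ) * (j+1) := by
      calc ((m:ℚ)+1) * (m.choose j : ℚ) = (((m+1) * (m.choose j) : ℕ) : ℚ) := by push_cast; ring
      _ = (((m+1).choose (j+1) * (j+1) : ℕ) : ℚ) := by rw [h2']
      _ = ((m+1).choose (j+1) : ℚ) * (j+1) := by push_cast; ring
    linarith [h1', h2'']
  have hA := key n k h
  have hB := key (n+k) k (by omega)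
  push_cast at hB
  have e1 : c (n+1) k = ((n+1).choose k : ℚ) / ((n+k+1).choose k : ℚ) := by
    have e : n + 1 + k = n + k + 1 := by ring
    rw [c, e]
  rw [e1, c]
  have d1 := cden n k
  have d2 : (((n+k+1).choose k : ℕ) : ℚ) ≠ 0 := by
    have e : n + k + 1 = n + 1 + k := by ring
    rw [e]; exact cden (n+1) k
  field_simp
  linear_combination (((n:ℚ)+1+k) * ((n+k).choose k : ℚ) * hA
    - ((n:ℚ)+1) * (n.choose k : ℚ) * hB)

lemma c11 : c 1 1 = 1/2 := by
  rw [c]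
  norm_num

lemma tele_s12 (g : ℕ → ℚ) : ∀ (b a : ℕ), a ≤ b + 1 →
    ∑ k ∈ Icc a b, (g (k+1) - g k) = g (b+1) - g a := by
  intro b
  induction b with
  | zero => intro a ha; interval_cases a <;> simp
  | succ b ih =>
    intro a ha
    rcases Nat.lt_or_ge a (b+2) with hlt|hge
    · have ha' : a ≤ b+1 := by omega
      rw [Finset.sum_Icc_succ_top ha', ih a ha']; ring
    · have : a = b+2 := by omega
      subst this
      rw [Finset.Icc_eq_empty (by omega)]; simp

lemma Fsum (n j : ℕ) (h : j ≤ n + 1) :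
    ∑ k ∈ Icc j n, (k:ℚ) * c n k = ((n:ℚ) + j) * c n j / 2 := by
  have hs : ∑ k ∈ Icc j n, (k:ℚ) * c n k
      = ∑ k ∈ Icc j n, ((fun (k : ℕ) => -(((n:ℚ)+(k:ℚ)) * c n k / 2)) (k+1)
          - (fun (k : ℕ) => -(((n:ℚ)+(k:ℚ)) * c n k / 2)) k) := by
    apply sum_congr rfl
    intro k hk
    simp only [mem_Icc] at hk
    have r := ratio1 n k hk.2
    push_cast
    linear_combination ((1:ℚ)/2) * r
  rw [hs, tele_s12 (fun (k : ℕ) => -(((n:ℚ)+(k:ℚ)) * c n k / 2)) n j h]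
  rw [c_big (by omega : n < n + 1)]
  ring

lemma Z2 (M : ℕ) (h : 2 ≤ M) :
    ∑ j ∈ Icc 1 M, (-1:ℚ)^(j+1) * (j:ℚ)^2 * c M j = 0 := by
  have key : ∑ j ∈ Icc 1 M, (2*(M:ℚ)-2) * ((-1:ℚ)^(j+1) * (j:ℚ)^2 * c M j) = 0 := by
    have hs : ∑ j ∈ Icc 1 M, (2*(M:ℚ)-2) * ((-1:ℚ)^(j+1) * (j:ℚ)^2 * c M j)
        = ∑ j ∈ Icc 1 M, ((fun (j : ℕ) => (-1:ℚ)^j * (j:ℚ) * ((j:ℚ)-1) * ((j:ℚ)+(M:ℚ)) * c M j) (j+1)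
            - (fun (j : ℕ) => (-1:ℚ)^j * (j:ℚ) * ((j:ℚ)-1) * ((j:ℚ)+(M:ℚ)) * c M j) j) := by
      apply sum_congr rfl
      intro j hj
      simp only [mem_Icc] at hj
      have r := ratio1 M j hj.2
      push_cast
      rw [pow_succ, pow_succ]
      linear_combination (-1:ℚ)^j * (j:ℚ) * ((j:ℚ)+1) * r
    rw [hs, tele_s12 (fun (j : ℕ) => (-1:ℚ)^j * (j:ℚ) * ((j:ℚ)-1) * ((j:ℚ)+(M:ℚ)) * c M j) M 1 (by omega)]
    rw [c_big (by omega : M < M + 1)]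
    norm_num
  have h2 : (2*(M:ℚ)-2) ≠ 0 := by
    have : (2:ℚ) ≤ (M:ℚ) := by exact_mod_cast h
    intro hc; nlinarith
  rw [← Finset.mul_sum] at key
  exact (mul_eq_zero.mp key).resolve_left h2

lemma Z (M : ℕ) (h : 1 ≤ M) :
    ∑ j ∈ Icc 1 M, 2 * (-1:ℚ)^(j+1) * c M j = 1 := by
  induction M, h using Nat.le_induction with
  | base => rw [Finset.Icc_self, sum_singleton, c11]; norm_num
  | succ m hm ih =>
    have key : ∑ j ∈ Icc 1 (m+1), 2 * (-1:ℚ)^(j+1) * c (m+1) j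
        = ∑ j ∈ Icc 1 (m+1), (2 * (-1:ℚ)^(j+1) * c m j
            + (2 * (-1:ℚ)^(j+1) * c (m+1) j * (j:ℚ)^2) / ((m:ℚ)+1)^2) := by
      apply sum_congr rfl
      intro j hj
      simp only [mem_Icc] at hj
      have r := ratio2 m j hj.2
      have hm1 : ((m:ℚ)+1)^2 ≠ 0 := by positivity
      field_simp
      linear_combination r
    rw [key, sum_add_distrib]
    have e1 : ∑ j ∈ Icc 1 (m+1), 2 * (-1:ℚ)^(j+1) * c m j = 1 := by
      rw [Finset.sum_Icc_succ_top (by omega : 1 ≤ m+1), c_big (by omega : m < m+1)]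
      rw [ih]; ring
    have e2 : ∑ j ∈ Icc 1 (m+1), (2 * (-1:ℚ)^(j+1) * c (m+1) j * (j:ℚ)^2) / ((m:ℚ)+1)^2 = 0 := by
      have : ∑ j ∈ Icc 1 (m+1), (2 * (-1:ℚ)^(j+1) * c (m+1) j * (j:ℚ)^2) / ((m:ℚ)+1)^2
          = (2 / ((m:ℚ)+1)^2) * ∑ j ∈ Icc 1 (m+1), (-1:ℚ)^(j+1) * (j:ℚ)^2 * c (m+1) j := by
        rw [Finset.mul_sum]
        apply sum_congr rfl
        intros; ring
      rw [this, Z2 (m+1) (by omega)]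
      ring
    rw [e1, e2]; ring

lemma SW1 (m n : ℕ) (f : ℕ → ℕ → ℚ) :
    ∑ k ∈ Icc m n, ∑ l ∈ Icc k n, f k l = ∑ l ∈ Icc m n, ∑ k ∈ Icc m l, f k l := by
  have h1 : ∀ k ∈ Icc m n, ∑ l ∈ Icc k n, f k l = ∑ l ∈ Icc m n, if k ≤ l then f k l else 0 := by
    intro k hk
    simp only [mem_Icc] at hk
    rw [← sum_filter]
    apply sum_congr ?_ (fun _ _ => rfl)
    ext l; simp only [mem_Icc, mem_filter]; omega
  rw [sum_congr rfl h1, Finset.sum_comm]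
  apply sum_congr rfl
  intro l hl
  simp only [mem_Icc] at hl
  rw [← sum_filter]
  apply sum_congr ?_ (fun _ _ => rfl)
  ext k; simp only [mem_Icc, mem_filter]; omega

lemma SW2 (N : ℕ) (f : ℕ → ℕ → ℚ) :
    ∑ k ∈ Icc 1 N, ∑ j ∈ Icc 1 (k-1), f j k = ∑ j ∈ Icc 1 N, ∑ k ∈ Icc (j+1) N, f j k := by
  have h1 : ∀ k ∈ Icc 1 N, ∑ j ∈ Icc 1 (k-1), f j k = ∑ j ∈ Icc 1 N, if j < k then f j k else 0 := by
    intro k hk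
    simp only [mem_Icc] at hk
    rw [← sum_filter]
    apply sum_congr ?_ (fun _ _ => rfl)
    ext j; simp only [mem_Icc, mem_filter]; omega
  rw [sum_congr rfl h1, Finset.sum_comm]
  apply sum_congr rfl
  intro j hj
  simp only [mem_Icc] at hj
  rw [← sum_filter]
  apply sum_congr ?_ (fun _ _ => rfl)
  ext k; simp only [mem_Icc, mem_filter]; omega

lemma tcS (i m : ℕ) (hi : 1 ≤ i) :
    ∑ j ∈ Icc i m, c j i / (j:ℚ)^2 = c m i / (i:ℚ)^2 := by
  rcases Nat.lt_or_ge m i with hmi|hmi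
  · rw [Finset.Icc_eq_empty (by omega), c_big hmi]
    simp
  · have hs : ∑ j ∈ Icc i m, c j i / (j:ℚ)^2
        = ∑ j ∈ Icc i m, ((fun (j : ℕ) => c (j-1) i / (i:ℚ)^2) (j+1)
            - (fun (j : ℕ) => c (j-1) i / (i:ℚ)^2) j) := by
      apply sum_congr rfl
      intro j hj
      simp only [mem_Icc] at hj
      obtain ⟨t, rfl⟩ : ∃ t, j = t + 1 := ⟨j - 1, by omega⟩
      simp only [Nat.add_sub_cancel]
      have r := ratio2 t i (by omega)
      have h1 : ((t:ℚ)+1)^2 ≠ 0 := by positivity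
      have h2 : (i:ℚ)^2 ≠ 0 := by
        have : (1:ℚ) ≤ (i:ℚ) := by exact_mod_cast hi
        positivity
      push_cast
      field_simp
      linear_combination -r
    rw [hs, tele_s12 (fun (j : ℕ) => c (j-1) i / (i:ℚ)^2) m i (by omega)]
    simp only [Nat.add_sub_cancel]
    rw [c_big (by omega : i - 1 < i)]
    ring

lemma Speel : ∀ (a m n : ℕ), S m n (a+1) = ∑ k ∈ Icc m n, S m k a * (1/(k:ℚ)^2) := by
  intro a
  induction a with
  | zero =>
    intro m n
    rw [S]
    apply sum_congr rfl
    intro k _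
    simp [S]
  | succ a ih =>
    intro m n
    rw [S]
    calc ∑ k ∈ Icc m n, (1/(k:ℚ)^2) * S k n (a+1)
        = ∑ k ∈ Icc m n, ∑ l ∈ Icc k n, (1/(k:ℚ)^2) * (S k l a * (1/(l:ℚ)^2)) := by
          apply sum_congr rfl
          intro k _
          rw [ih k n, Finset.mul_sum]
    _ = ∑ l ∈ Icc m n, ∑ k ∈ Icc m l, (1/(k:ℚ)^2) * (S k l a * (1/(l:ℚ)^2)) := SW1 m n _
    _ = ∑ l ∈ Icc m n, S m l (a+1) * (1/(l:ℚ)^2) := by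
          apply sum_congr rfl
          intro l _
          rw [S, Finset.sum_mul]
          apply sum_congr rfl
          intro k _
          ring

lemma E1 : ∀ m : ℕ, S 1 m 1 = ∑ j ∈ Icc 1 m, 2 * (-1:ℚ)^(j+1) * c m j * (1/(j:ℚ)^2) := by
  have hS1 : ∀ m : ℕ, S 1 m 1 = ∑ j ∈ Icc 1 m, (1/(j:ℚ)^2) := by
    intro m; rw [S]; apply sum_congr rfl; intro k _; rw [S]; ring
  intro m
  induction m with
  | zero => simp [hS1]
  | succ m ih =>
    rw [hS1] at *
    rw [Finset.sum_Icc_succ_top (by omega : 1 ≤ m+1), ih]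
    have key : ∑ j ∈ Icc 1 (m+1), 2 * (-1:ℚ)^(j+1) * c (m+1) j * (1/(j:ℚ)^2)
        = ∑ j ∈ Icc 1 (m+1), (2 * (-1:ℚ)^(j+1) * c m j * (1/(j:ℚ)^2)
            + 2 * (-1:ℚ)^(j+1) * c (m+1) j * (1/((m:ℚ)+1)^2)) := by
      apply sum_congr rfl
      intro j hj
      simp only [mem_Icc] at hj
      have r := ratio2 m j hj.2
      have h1 : ((m:ℚ)+1)^2 ≠ 0 := by positivity
      have h2 : (j:ℚ)^2 ≠ 0 := by
        have : (1:ℚ) ≤ (j:ℚ) := by exact_mod_cast hj.1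
        positivity
      field_simp
      rw [div_add' _ _ _ h2, div_left_inj' h2]
      linear_combination r
    rw [key, sum_add_distrib]
    have e1 : ∑ j ∈ Icc 1 (m+1), 2 * (-1:ℚ)^(j+1) * c m j * (1/(j:ℚ)^2)
        = ∑ j ∈ Icc 1 m, 2 * (-1:ℚ)^(j+1) * c m j * (1/(j:ℚ)^2) := by
      rw [Finset.sum_Icc_succ_top (by omega : 1 ≤ m+1), c_big (by omega : m < m+1)]
      ring
    have e2 : ∑ j ∈ Icc 1 (m+1), 2 * (-1:ℚ)^(j+1) * c (m+1) j * (1/((m:ℚ)+1)^2)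
        = 1/((m:ℚ)+1)^2 := by
      have : ∑ j ∈ Icc 1 (m+1), 2 * (-1:ℚ)^(j+1) * c (m+1) j * (1/((m:ℚ)+1)^2)
          = (∑ j ∈ Icc 1 (m+1), 2 * (-1:ℚ)^(j+1) * c (m+1) j) * (1/((m:ℚ)+1)^2) := by
        rw [Finset.sum_mul]
      rw [this, Z (m+1) (by omega)]
      push_cast
      ring
    rw [e1, e2]
    push_cast
    ring

lemma PF : ∀ (a m : ℕ), S 1 m (a+1) = ∑ j ∈ Icc 1 m, 2 * (-1:ℚ)^(j+1) * c m j * (1/(j:ℚ)^2)^(a+1) := by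
  intro a
  induction a with
  | zero => intro m; simpa using E1 m
  | succ a ih =>
    intro m
    rw [Speel (a+1) 1 m]
    calc ∑ j ∈ Icc 1 m, S 1 j (a+1) * (1/(j:ℚ)^2)
        = ∑ j ∈ Icc 1 m, ∑ i ∈ Icc 1 j, (2 * (-1:ℚ)^(i+1) * c j i * (1/(i:ℚ)^2)^(a+1)) * (1/(j:ℚ)^2) := by
          apply sum_congr rfl
          intro j _
          rw [ih j, Finset.sum_mul]
    _ = ∑ i ∈ Icc 1 m, ∑ j ∈ Icc i m, (2 * (-1:ℚ)^(i+1) * c j i * (1/(i:ℚ)^2)^(a+1)) * (1/(j:ℚ)^2) := by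
          rw [SW1 1 m (fun i j => (2 * (-1:ℚ)^(i+1) * c j i * (1/(i:ℚ)^2)^(a+1)) * (1/(j:ℚ)^2))]
    _ = ∑ i ∈ Icc 1 m, 2 * (-1:ℚ)^(i+1) * c m i * (1/(i:ℚ)^2)^(a+2) := by
          apply sum_congr rfl
          intro i hi
          simp only [mem_Icc] at hi
          have : ∑ j ∈ Icc i m, (2 * (-1:ℚ)^(i+1) * c j i * (1/(i:ℚ)^2)^(a+1)) * (1/(j:ℚ)^2)
              = (2 * (-1:ℚ)^(i+1) * (1/(i:ℚ)^2)^(a+1)) * ∑ j ∈ Icc i m, c j i / (j:ℚ)^2 := by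
            rw [Finset.mul_sum]
            apply sum_congr rfl
            intro j _
            ring
          rw [this, tcS i m hi.1, pow_succ]
          ring

def Aq (a k : ℕ) : ℚ := ∑ j ∈ Icc 1 (k-1), ((-1:ℚ)^k - (-1:ℚ)^j) / (j:ℚ)^(2*a)

lemma Wsum (n : ℕ) : ∀ j : ℕ, j ≤ n + 1 →
    ∑ k ∈ Icc (j+1) (n+1), (1 - (-1:ℚ)^(k+j)) * (k:ℚ) * c (n+1) k
      = ((n:ℚ)+1)^2 * c n j / (2*((n:ℚ)+1) - 1) := by
  have hden : (2*((n:ℚ)+1) - 1) ≠ 0 := by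
    have : (0:ℚ) ≤ (n:ℚ) := Nat.cast_nonneg n
    intro hc; nlinarith
  intro j hj
  refine Nat.decreasingInduction' (fun k hk _ ih => ?_) hj ?_
  case refine_2 =>
    rw [Finset.Icc_eq_empty (by omega), c_big (by omega : n < n+1)]
    simp
  · have ext : ∑ l ∈ Icc (k+1+1) (n+1), (1 - (-1:ℚ)^(l+(k+1))) * (l:ℚ) * c (n+1) l
        = ∑ l ∈ Icc (k+1) (n+1), (1 - (-1:ℚ)^(l+(k+1))) * (l:ℚ) * c (n+1) l := by
      apply Finset.sum_subset
      · apply Finset.Icc_subset_Icc_left; omega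
      · intro x hx hx2
        simp only [mem_Icc] at hx hx2
        have : x = k + 1 := by omega
        subst this
        have : (-1:ℚ)^(k+1+(k+1)) = 1 := by
          rw [show k+1+(k+1) = 2*(k+1) from by ring, pow_mul]
          norm_num
        rw [this]; ring
    rw [ext] at ih
    have combine : ∑ k_1 ∈ Icc (k+1) (n+1), (1 - (-1:ℚ)^(k_1+k)) * (k_1:ℚ) * c (n+1) k_1
        = ∑ l ∈ Icc (k+1) (n+1), (2 * ((l:ℚ) * c (n+1) l)
            - (1 - (-1:ℚ)^(l+(k+1))) * (l:ℚ) * c (n+1) l) := by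
      apply sum_congr rfl
      intro l _
      have : (-1:ℚ)^(l+(k+1)) = -(-1:ℚ)^(l+k) := by
        rw [show l+(k+1) = (l+k)+1 from by ring, pow_succ]; ring
      rw [this]; ring
    rw [combine, Finset.sum_sub_distrib, ih, ← Finset.mul_sum, Fsum (n+1) (k+1) (by omega)]
    push_cast
    have r1 := ratio1 (n+1) k (by omega)
    have r2a := ratio2 n k (by omega)
    have r2b := ratio2 n (k+1) (by omega)
    push_cast at r1 r2a r2b
    field_simp
    linear_combination ((n:ℚ)+(k:ℚ)+1) * r1 + r2a + r2b

lemma starId (a n : ℕ) :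
    2 * ∑ k ∈ Icc 1 (n+1), (k:ℚ) * Aq (a+1) k * c (n+1) k
      = ((n:ℚ)+1)^2 * S 1 n (a+1) / (2*((n:ℚ)+1) - 1) := by
  have hden : (2*((n:ℚ)+1) - 1) ≠ 0 := by
    have : (0:ℚ) ≤ (n:ℚ) := Nat.cast_nonneg n
    intro hc; nlinarith
  have step1 : ∑ k ∈ Icc 1 (n+1), (k:ℚ) * Aq (a+1) k * c (n+1) k
      = ∑ k ∈ Icc 1 (n+1), ∑ j ∈ Icc 1 (k-1),
          ((k:ℚ) * c (n+1) k * ((-1:ℚ)^k - (-1:ℚ)^j) / (j:ℚ)^(2*(a+1))) := by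
    apply sum_congr rfl
    intro k _
    rw [Aq, Finset.mul_sum, Finset.sum_mul]
    apply sum_congr rfl
    intro j _
    ring
  rw [step1, SW2 (n+1) (fun j k => (k:ℚ) * c (n+1) k * ((-1:ℚ)^k - (-1:ℚ)^j) / (j:ℚ)^(2*(a+1)))]
  have step2 : ∀ j ∈ Icc 1 (n+1),
      ∑ k ∈ Icc (j+1) (n+1), ((k:ℚ) * c (n+1) k * ((-1:ℚ)^k - (-1:ℚ)^j) / (j:ℚ)^(2*(a+1)))
        = (-1:ℚ)^(j+1) * (1/(j:ℚ)^(2*(a+1))) * (((n:ℚ)+1)^2 * c n j / (2*((n:ℚ)+1) - 1)) := by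
    intro j hj
    simp only [mem_Icc] at hj
    have : ∑ k ∈ Icc (j+1) (n+1), ((k:ℚ) * c (n+1) k * ((-1:ℚ)^k - (-1:ℚ)^j) / (j:ℚ)^(2*(a+1)))
        = ((-1:ℚ)^(j+1) * (1/(j:ℚ)^(2*(a+1)))) *
            ∑ k ∈ Icc (j+1) (n+1), (1 - (-1:ℚ)^(k+j)) * (k:ℚ) * c (n+1) k := by
      rw [Finset.mul_sum]
      apply sum_congr rfl
      intro k _
      have h1 : (-1:ℚ)^(k+j) = (-1:ℚ)^k * (-1:ℚ)^j := pow_add (-1:ℚ) k j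
      have h2 : (-1:ℚ)^j * (-1:ℚ)^j = 1 := by
        rw [← pow_add, show j+j = 2*j from by ring, pow_mul]; norm_num
      have h3 : (-1:ℚ)^(j+1) = -(-1:ℚ)^j := by rw [pow_succ]; ring
      rw [h3, h1]
      linear_combination (-((k:ℚ) * c (n+1) k / (j:ℚ)^(2*(a+1))) * (-1:ℚ)^k) * h2
    rw [this, Wsum n j hj.2]
  rw [sum_congr rfl step2]
  have pf := PF a n
  have extpf : S 1 n (a+1) = ∑ j ∈ Icc 1 (n+1), 2 * (-1:ℚ)^(j+1) * c n j * (1/(j:ℚ)^2)^(a+1) := by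
    rw [pf, Finset.sum_Icc_succ_top (by omega : 1 ≤ n+1), c_big (by omega : n < n+1)]
    ring
  rw [extpf]
  simp only [Finset.mul_sum, Finset.sum_div]
  apply sum_congr rfl
  intro j hj
  simp only [mem_Icc] at hj
  have hjne : (j:ℚ) ≠ 0 := by
    have : (1:ℚ) ≤ (j:ℚ) := by exact_mod_cast hj.1
    intro hc; rw [hc] at this; norm_num at this
  have hpow : (1/(j:ℚ)^2)^(a+1) = 1/(j:ℚ)^(2*(a+1)) := by
    rw [div_pow, one_pow, ← pow_mul]
  rw [hpow]
  field_simp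

lemma Sempty (m n cc : ℕ) (h : n < m) : S m n (cc+1) = 0 := by
  rw [S, Finset.Icc_eq_empty (by omega)]; simp

lemma SD : ∀ (cc m n : ℕ), m ≤ n + 1 →
    S m (n+1) (cc+1) = S m n (cc+1) + (1/((n:ℚ)+1)^2) * S m (n+1) cc := by
  intro cc
  induction cc with
  | zero =>
    intro m n h
    have l1 : S m (n+1) 1 = ∑ k ∈ Icc m (n+1), (1/(k:ℚ)^2) := by
      rw [S]; apply sum_congr rfl; intros; simp [S]
    have l2 : S m n 1 = ∑ k ∈ Icc m n, (1/(k:ℚ)^2) := by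
      rw [S]; apply sum_congr rfl; intros; simp [S]
    rw [l1, l2, Finset.sum_Icc_succ_top h]
    have : S m (n+1) 0 = 1 := rfl
    rw [this]
    push_cast; ring
  | succ cc ih =>
    intro m n h
    have l1 : S m (n+1) (cc+2) = (∑ k ∈ Icc m n, (1/(k:ℚ)^2) * S k (n+1) (cc+1))
        + (1/((n:ℚ)+1)^2) * S (n+1) (n+1) (cc+1) := by
      rw [S, Finset.sum_Icc_succ_top h]; push_cast; ring
    have l2 : S m n (cc+2) = ∑ k ∈ Icc m n, (1/(k:ℚ)^2) * S k n (cc+1) := by rw [S]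
    have l3 : S m (n+1) (cc+1) = (∑ k ∈ Icc m n, (1/(k:ℚ)^2) * S k (n+1) cc)
        + (1/((n:ℚ)+1)^2) * S (n+1) (n+1) cc := by
      rw [S, Finset.sum_Icc_succ_top h]; push_cast; ring
    have l4 : S (n+1) (n+1) (cc+1) = (1/((n:ℚ)+1)^2) * S (n+1) (n+1) cc := by
      rw [S, Finset.Icc_self, sum_singleton]; push_cast; ring
    have l5 : ∀ k ∈ Icc m n, (1/(k:ℚ)^2) * S k (n+1) (cc+1)
        = (1/(k:ℚ)^2) * S k n (cc+1) + (1/((n:ℚ)+1)^2) * ((1/(k:ℚ)^2) * S k (n+1) cc) := by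
      intro k hk
      simp only [mem_Icc] at hk
      rw [ih k n (by omega)]; ring
    rw [l1, l2, l3, l4, sum_congr rfl l5, sum_add_distrib, ← Finset.mul_sum]
    ring

lemma Rrec (n a b : ℕ) :
    R (n+1) a (b+2) = R n a (b+2) + (1/((n:ℚ)+1)^2) * R (n+1) a (b+1) := by
  have l1 : R (n+1) a (b+2) = ∑ k ∈ Icc 1 (n+1), S 1 (k-1) a * S k (n+1) (b+1) / (2*(k:ℚ) - 1) := rfl
  have l5 : ∀ k ∈ Icc 1 (n+1), S 1 (k-1) a * S k (n+1) (b+1) / (2*(k:ℚ) - 1)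
      = S 1 (k-1) a * S k n (b+1) / (2*(k:ℚ) - 1)
        + (1/((n:ℚ)+1)^2) * (S 1 (k-1) a * S k (n+1) b / (2*(k:ℚ) - 1)) := by
    intro k hk
    simp only [mem_Icc] at hk
    rw [SD b k n (by omega)]; ring
  rw [l1, sum_congr rfl l5, sum_add_distrib, ← Finset.mul_sum]
  have l6 : ∑ k ∈ Icc 1 (n+1), S 1 (k-1) a * S k n (b+1) / (2*(k:ℚ) - 1) = R n a (b+2) := by
    rw [R, Finset.sum_Icc_succ_top (by omega : 1 ≤ n+1), Sempty (n+1) n b (by omega)]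
    push_cast; ring
  have l7 : ∑ k ∈ Icc 1 (n+1), S 1 (k-1) a * S k (n+1) b / (2*(k:ℚ) - 1) = R (n+1) a (b+1) := rfl
  rw [l6, l7]

noncomputable def LL (n a e : ℕ) : ℚ := ∑ k ∈ Icc 1 n, Aq a k * c n k / (k:ℚ)^e

lemma LLrec (n a e : ℕ) :
    LL (n+1) a (e+2) = LL n a (e+2) + (1/((n:ℚ)+1)^2) * LL (n+1) a e := by
  have key : ∀ k ∈ Icc 1 (n+1), Aq a k * c (n+1) k / (k:ℚ)^(e+2)
      = Aq a k * c n k / (k:ℚ)^(e+2) + (1/((n:ℚ)+1)^2) * (Aq a k * c (n+1) k / (k:ℚ)^e) := by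
    intro k hk
    simp only [mem_Icc] at hk
    have r := ratio2 n k (by omega)
    have h1 : (k:ℚ) ≠ 0 := by
      have : (1:ℚ) ≤ (k:ℚ) := by exact_mod_cast hk.1
      intro hc; rw [hc] at this; norm_num at this
    have h2 : ((n:ℚ)+1) ≠ 0 := by positivity
    have h3 : c (n+1) k / (k:ℚ)^2 = c n k/(k:ℚ)^2 + c (n+1) k/((n:ℚ)+1)^2 := by
      field_simp
      linear_combination r
    have hp : (k:ℚ)^(e+2) = (k:ℚ)^2 * (k:ℚ)^e := by ring
    have expand : ∀ x:ℚ, Aq a k * x / (k:ℚ)^(e+2) = (Aq a k / (k:ℚ)^e) * (x/(k:ℚ)^2) := by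
      intro x; rw [hp]; ring
    rw [expand (c (n+1) k), expand (c n k), h3]
    ring
  rw [LL, sum_congr rfl key, sum_add_distrib, ← Finset.mul_sum]
  have e1 : ∑ k ∈ Icc 1 (n+1), Aq a k * c n k / (k:ℚ)^(e+2) = LL n a (e+2) := by
    rw [LL, Finset.sum_Icc_succ_top (by omega : 1 ≤ n+1), c_big (by omega : n < n+1)]
    push_cast; ring
  rw [e1, show LL (n+1) a e = ∑ k ∈ Icc 1 (n+1), Aq a k * c (n+1) k / (k:ℚ)^e from rfl]

lemma base1 (a : ℕ) : ∀ n, 2 * LL n (a+1) 1 = R n (a+1) 1 := by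
  intro n
  induction n with
  | zero => simp [LL, R]
  | succ n ih =>
    have hL : 2 * LL (n+1) (a+1) 1 = 2 * LL n (a+1) 1
        + (1/((n:ℚ)+1)^2) * (2 * ∑ k ∈ Icc 1 (n+1), (k:ℚ) * Aq (a+1) k * c (n+1) k) := by
      have key : ∀ k ∈ Icc 1 (n+1), Aq (a+1) k * c (n+1) k / (k:ℚ)^1
          = Aq (a+1) k * c n k / (k:ℚ)^1
            + (1/((n:ℚ)+1)^2) * ((k:ℚ) * Aq (a+1) k * c (n+1) k) := by
        intro k hk
        simp only [mem_Icc] at hk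
        have r := ratio2 n k (by omega)
        have h1 : (k:ℚ) ≠ 0 := by
          have : (1:ℚ) ≤ (k:ℚ) := by exact_mod_cast hk.1
          intro hc; rw [hc] at this; norm_num at this
        have h2 : ((n:ℚ)+1) ≠ 0 := by positivity
        have h3 : c (n+1) k / (k:ℚ)^2 = c n k/(k:ℚ)^2 + c (n+1) k/((n:ℚ)+1)^2 := by
          field_simp
          linear_combination r
        have expand : ∀ x:ℚ, Aq (a+1) k * x / (k:ℚ)^1 = (Aq (a+1) k * (k:ℚ)) * (x/(k:ℚ)^2) := by
          intro x; rw [pow_one]; field_simp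
        rw [expand (c (n+1) k), expand (c n k), h3]
        ring
      rw [LL, sum_congr rfl key, sum_add_distrib, ← Finset.mul_sum]
      have e1 : ∑ k ∈ Icc 1 (n+1), Aq (a+1) k * c n k / (k:ℚ)^1 = LL n (a+1) 1 := by
        rw [LL, Finset.sum_Icc_succ_top (by omega : 1 ≤ n+1), c_big (by omega : n < n+1)]
        push_cast; ring
      rw [e1]; ring
    have hR : R (n+1) (a+1) 1 = R n (a+1) 1 + S 1 n (a+1) / (2*((n:ℚ)+1) - 1) := by
      rw [R, R, Finset.sum_Icc_succ_top (by omega : 1 ≤ n+1)]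
      have : ∀ k ∈ Icc 1 n, S 1 (k-1) (a+1) * S k (n+1) 0 / (2*(k:ℚ)-1)
          = S 1 (k-1) (a+1) * S k n 0 / (2*(k:ℚ)-1) := by
        intro k _
        have e0 : S k (n+1) 0 = 1 := rfl
        have e0' : S k n 0 = 1 := rfl
        rw [e0, e0']
      rw [sum_congr rfl this]
      have e0 : S (n+1) (n+1) 0 = 1 := rfl
      have e1 : (n+1) - 1 = n := by omega
      rw [e1, e0]
      simp only [Nat.sub_self]
      push_cast
      ring
    rw [hL, starId a n, ih, hR]
    have hden : (2*((n:ℚ)+1) - 1) ≠ 0 := by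
      have : (0:ℚ) ≤ (n:ℚ) := Nat.cast_nonneg n
      intro hc; nlinarith
    have h2 : ((n:ℚ)+1) ≠ 0 := by positivity
    field_simp

lemma mainlem (a : ℕ) : ∀ b n, 2 * LL n (a+1) (2*b+1) = R n (a+1) (b+1) := by
  intro b
  induction b with
  | zero => intro n; simpa using base1 a n
  | succ b ihb =>
    intro n
    induction n with
    | zero =>
      have he : Icc 1 0 = (∅ : Finset ℕ) := by
        apply Finset.Icc_eq_empty; omega
      simp [LL, R, he]
    | succ n ihn =>
      have h1 : 2*b+1+2 = 2*(b+1)+1 := by ring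
      have lr := LLrec n (a+1) (2*b+1)
      rw [h1] at lr
      calc 2 * LL (n+1) (a+1) (2*(b+1)+1)
          = 2*LL n (a+1) (2*(b+1)+1) + (1/((n:ℚ)+1)^2) * (2 * LL (n+1) (a+1) (2*b+1)) := by
            rw [lr]; ring
      _ = R n (a+1) (b+2) + (1/((n:ℚ)+1)^2) * R (n+1) (a+1) (b+1) := by
            rw [ihn, ihb (n+1)]
      _ = R (n+1) (a+1) (b+2) := (Rrec n (a+1) b).symm

theorem stmt_12 (n a b : ℕ) (hn : 1 ≤ n) (ha : 1 ≤ a) (hb : 1 ≤ b) :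
    2 * ∑ k ∈ Finset.Icc 1 n, (1 / (k : ℚ) ^ (2 * b - 1)) *
      ((n.choose k : ℚ) / ((n + k).choose k)) *
      ((-1 : ℚ) ^ k * (∑ j ∈ Finset.Icc 1 (k - 1), (1 : ℚ) / (j : ℚ) ^ (2 * a)) -
        ∑ j ∈ Finset.Icc 1 (k - 1), (-1 : ℚ) ^ j / (j : ℚ) ^ (2 * a)) =
    R n a b := by
  obtain ⟨a', rfl⟩ : ∃ a', a = a'+1 := ⟨a-1, by omega⟩
  obtain ⟨b', rfl⟩ : ∃ b', b = b'+1 := ⟨b-1, by omega⟩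
  have key := mainlem a' b' n
  rw [← key]
  have e : 2*(b'+1)-1 = 2*b'+1 := by omega
  rw [e]
  congr 1
  apply sum_congr rfl
  intro k hk
  have hA : Aq (a'+1) k = (-1:ℚ)^k * (∑ j ∈ Icc 1 (k-1), (1:ℚ)/(j:ℚ)^(2*(a'+1)))
      - ∑ j ∈ Icc 1 (k-1), (-1:ℚ)^j/(j:ℚ)^(2*(a'+1)) := by
    rw [Aq, Finset.mul_sum, ← Finset.sum_sub_distrib]
    apply sum_congr rfl
    intro j _
    ring
  rw [hA, show ((n.choose k : ℚ) / (((n + k).choose k : ℕ) : ℚ)) = c n k from rfl]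
  rw [show LL n (a'+1) (2*b'+1) = ∑ k ∈ Icc 1 n, Aq (a'+1) k * c n k / (k:ℚ)^(2*b'+1) from rfl] at key
  ring
end
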